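/- arXiv:math/0609629 — 9 statements merged into one kernel-verified Lean document; each statement's English description precedes it below -/
import Mathlib

section
/- Let a, b be positive rationals and c a nonnegative rational with c² < ab, and let c₁, c₂ be nonpositive rationals. Consider solutions (x, y) in positive integers of the system of inequalities −a·x + c·y ≤ c₁ and c·x − b·y ≤ c₂. Then: (1) there exists a solution with x < y if and only if c < a; (2) there exists a solution with y < x if and only if c < b; (3) there exist both a solution with x < y and a solution with y < x if and only if c < min{a, b}. In particular, since c² < ab forces c < a or c < b, the system always has a solution with x ≠ y. -/
/-- Solutions in positive integers of `-a x + c y ≤ c₁`, `c x - b y ≤ c₂`. -/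
def IsSol (a b c c₁ c₂ : ℚ) (x y : ℤ) : Prop :=
  0 < x ∧ 0 < y ∧ -a * (x : ℚ) + c * (y : ℚ) ≤ c₁ ∧ c * (x : ℚ) - b * (y : ℚ) ≤ c₂

lemma isSol_swap {a b c c₁ c₂ : ℚ} {x y : ℤ} (h : IsSol a b c c₁ c₂ x y) :
    IsSol b a c c₂ c₁ y x := by
  obtain ⟨h1, h2, h3, h4⟩ := h
  exact ⟨h2, h1, by linarith, by linarith⟩

lemma exists_sol_lt (a b c c₁ c₂ : ℚ) (ha : 0 < a) (hb : 0 < b) (hc : 0 ≤ c)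
    (hcab : c ^ 2 < a * b) (h1 : c₁ ≤ 0) (h2 : c₂ ≤ 0) (hca : c < a) :
    ∃ x y : ℤ, IsSol a b c c₁ c₂ x y ∧ x < y := by
  have hac : 0 < a - c := by linarith
  have habc : 0 < a * b - c ^ 2 := by linarith
  set X : ℚ := max ((c - c₁) / (a - c)) (((c - c₁) * b - c * c₂) / (a * b - c ^ 2)) with hX
  set x : ℤ := max 1 ⌈X⌉ with hxdef
  have hx1 : (1 : ℤ) ≤ x := le_max_left _ _
  have hxX : X ≤ (x : ℚ) :=
    le_trans (Int.le_ceil X) (by exact_mod_cast le_max_right 1 ⌈X⌉)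
  have hxq : (0 : ℚ) < (x : ℚ) := by exact_mod_cast lt_of_lt_of_le one_pos hx1
  have hT1 : c - c₁ ≤ (a - c) * (x : ℚ) := by
    have h := le_trans (le_max_left _ ((((c - c₁) * b - c * c₂) / (a * b - c ^ 2)))) hxX
    rw [div_le_iff₀ hac] at h; linarith
  have hT2 : (c - c₁) * b - c * c₂ ≤ (a * b - c ^ 2) * (x : ℚ) := by
    have h := le_trans (le_max_right ((c - c₁) / (a - c)) _) hxX
    rw [div_le_iff₀ habc] at h; linarith
  set y : ℤ := max (x + 1) ⌈(c * (x : ℚ) - c₂) / b⌉ with hydef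
  have hxy : x < y := lt_of_lt_of_le (lt_add_one x) (le_max_left _ _)
  have hyc : (c * (x : ℚ) - c₂) / b ≤ (y : ℚ) :=
    le_trans (Int.le_ceil _) (by exact_mod_cast le_max_right (x + 1) _)
  have h2nd : c * (x : ℚ) - b * (y : ℚ) ≤ c₂ := by
    rw [div_le_iff₀ hb] at hyc; linarith
  have h1st : -a * (x : ℚ) + c * (y : ℚ) ≤ c₁ := by
    rcases max_choice (x + 1) ⌈(c * (x : ℚ) - c₂) / b⌉ with h | h
    · have hy : (y : ℚ) = (x : ℚ) + 1 := by rw [hydef, h]; push_cast; ring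
      rw [hy]; nlinarith
    · have hylt : (y : ℚ) < (c * (x : ℚ) - c₂) / b + 1 := by
        rw [hydef, h]; exact Int.ceil_lt_add_one _
      have hylt2 : ((y : ℚ) - 1) * b < c * (x : ℚ) - c₂ := by
        rw [← lt_div_iff₀ hb]; linarith
      have h3 : c * (((y : ℚ) - 1) * b) ≤ c * (c * (x : ℚ) - c₂) :=
        mul_le_mul_of_nonneg_left hylt2.le hc
      nlinarith [h3, hT2, hb]
  exact ⟨x, y, ⟨lt_of_lt_of_le one_pos hx1,
    lt_trans (lt_of_lt_of_le one_pos hx1) hxy, h1st, h2nd⟩, hxy⟩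

lemma sol_lt_imp {a b c c₁ c₂ : ℚ} (ha : 0 < a) (hc : 0 ≤ c) (h1 : c₁ ≤ 0)
    (hs : ∃ x y : ℤ, IsSol a b c c₁ c₂ x y ∧ x < y) : c < a := by
  obtain ⟨x, y, ⟨hx, hy, hA, _⟩, hxy⟩ := hs
  have hx' : (x : ℚ) + 1 ≤ (y : ℚ) := by exact_mod_cast Int.add_one_le_iff.mpr hxy
  have hyq : (0 : ℚ) < (y : ℚ) := by exact_mod_cast hy
  have hxq : (0 : ℚ) < (x : ℚ) := by exact_mod_cast hx
  nlinarith

theorem nash_two_components (a b c c₁ c₂ : ℚ) (ha : 0 < a) (hb : 0 < b) (hc : 0 ≤ c)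
    (hcab : c ^ 2 < a * b) (h1 : c₁ ≤ 0) (h2 : c₂ ≤ 0) :
    ((∃ x y : ℤ, IsSol a b c c₁ c₂ x y ∧ x < y) ↔ c < a) ∧
    ((∃ x y : ℤ, IsSol a b c c₁ c₂ x y ∧ y < x) ↔ c < b) ∧
    (((∃ x y : ℤ, IsSol a b c c₁ c₂ x y ∧ x < y) ∧
      (∃ x y : ℤ, IsSol a b c c₁ c₂ x y ∧ y < x)) ↔ c < min a b) ∧
    (∃ x y : ℤ, IsSol a b c c₁ c₂ x y ∧ x ≠ y) := by
  have hcab' : c ^ 2 < b * a := by linarith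
  have key1 : (∃ x y : ℤ, IsSol a b c c₁ c₂ x y ∧ x < y) ↔ c < a :=
    ⟨fun hs => sol_lt_imp ha hc h1 hs,
     fun hca => exists_sol_lt a b c c₁ c₂ ha hb hc hcab h1 h2 hca⟩
  have key2 : (∃ x y : ℤ, IsSol a b c c₁ c₂ x y ∧ y < x) ↔ c < b := by
    constructor
    · rintro ⟨x, y, hs, hyx⟩
      exact sol_lt_imp hb hc h2 ⟨y, x, isSol_swap hs, hyx⟩
    · intro hcb
      obtain ⟨u, v, hs, huv⟩ := exists_sol_lt b a c c₂ c₁ hb ha hc hcab' h2 h1 hcb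
      exact ⟨v, u, isSol_swap hs, huv⟩
  have hor : c < a ∨ c < b := by
    by_contra h
    push_neg at h
    nlinarith [h.1, h.2]
  refine ⟨key1, key2, ?_, ?_⟩
  · rw [key1, key2, lt_min_iff]
  · rcases hor with h | h
    · obtain ⟨x, y, hs, hxy⟩ := key1.mpr h
      exact ⟨x, y, hs, ne_of_lt hxy⟩
    · obtain ⟨x, y, hs, hyx⟩ := key2.mpr h
      exact ⟨x, y, hs, ne_of_gt hyx⟩
end

section
/- For every vector C ∈ ℚⁿ with all entries ≤ 0 and every pair of distinct indices i, j, there exists a vector X ∈ ℤⁿ with all entries > 0 such that (AX)_k ≤ C_k for all k and X_i ≠ X_j. -/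
/-- `A` is negative definite: `xᵀAx < 0` for every nonzero real vector `x`. -/
def NegDefQ {V : Type*} [Fintype V] (A : Matrix V V ℚ) : Prop :=
  ∀ x : V → ℝ, x ≠ 0 → ∑ i, ∑ j, x i * (A i j : ℝ) * x j < 0

/-- Numerical Nash condition `NN_(i,j)`: for every rational vector `C` with nonpositive
entries there is an integer vector `X` with positive entries such that `(AX)_k ≤ C_k`
for all `k` and `X i < X j`. -/
def NashNN {V : Type*} [Fintype V] (A : Matrix V V ℚ) (i j : V) : Prop :=
  ∀ C : V → ℚ, (∀ k, C k ≤ 0) →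
    ∃ X : V → ℤ, (∀ k, 0 < X k) ∧ (∀ k, ∑ t, A k t * (X t : ℚ) ≤ C k) ∧ X i < X j

/-- Condition `(NN)`: `NN_(i,j)` for every ordered pair of distinct indices. -/
def NashNNAll {V : Type*} [Fintype V] (A : Matrix V V ℚ) : Prop :=
  ∀ i j : V, i ≠ j → NashNN A i j

/-- Negative definiteness over the rationals. -/
lemma ratneg_of_NegDefQ {n : ℕ} (A : Matrix (Fin n) (Fin n) ℚ) (hneg : NegDefQ A) :
    ∀ x : Fin n → ℚ, x ≠ 0 → ∑ i, ∑ j, x i * A i j * x j < 0 := by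
  intro x hx
  have hxr : (fun i => (x i : ℝ)) ≠ 0 := by
    intro h; apply hx; funext i; have := congrFun h i; simpa using this
  have h1 := hneg _ hxr
  have hcast : ((∑ i, ∑ j, x i * A i j * x j : ℚ) : ℝ)
      = ∑ i, ∑ j, (x i : ℝ) * (A i j : ℝ) * (x j : ℝ) := by push_cast; ring_nf
  have : ((∑ i, ∑ j, x i * A i j * x j : ℚ) : ℝ) < 0 := by rw [hcast]; exact h1
  exact_mod_cast this

/-- Solve `A y = -1`. -/
lemma exists_solution {n : ℕ} (A : Matrix (Fin n) (Fin n) ℚ) (hneg : NegDefQ A) :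
    ∃ y : Fin n → ℚ, ∀ k, ∑ t, A k t * y t = -1 := by
  have hratneg := ratneg_of_NegDefQ A hneg
  have hinj : Function.Injective A.mulVecLin := by
    rw [← LinearMap.ker_eq_bot, LinearMap.ker_eq_bot']
    intro x hx
    by_contra hx0
    have h2 := hratneg x hx0
    have : ∑ i, ∑ j, x i * A i j * x j = 0 := by
      calc ∑ i, ∑ j, x i * A i j * x j = ∑ i, x i * (∑ j, A i j * x j) := by
            congr 1; funext i; rw [Finset.mul_sum]; congr 1; funext j; ring
        _ = 0 := by
            apply Finset.sum_eq_zero; intro i _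
            have : A.mulVec x i = 0 := by rw [show A.mulVec x = 0 from hx]; rfl
            rw [show (∑ j, A i j * x j) = A.mulVec x i from rfl, this, mul_zero]
    linarith
  have hsurj : Function.Surjective A.mulVecLin :=
    (LinearMap.injective_iff_surjective (f := A.mulVecLin)).mp hinj
  obtain ⟨y, hy⟩ := hsurj (fun _ => -1)
  exact ⟨y, fun k => congrFun hy k⟩

/-- Any solution of `A y = -1` is positive. -/
lemma solution_pos {n : ℕ} (A : Matrix (Fin n) (Fin n) ℚ)
    (hoff : ∀ i j, i ≠ j → 0 ≤ A i j)
    (hratneg : ∀ x : Fin n → ℚ, x ≠ 0 → ∑ i, ∑ j, x i * A i j * x j < 0)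
    (y : Fin n → ℚ) (hy : ∀ k, ∑ t, A k t * y t = -1) : ∀ k, 0 < y k := by
  set P : Fin n → ℚ := fun k => max (-(y k)) 0 with hP
  set Q : Fin n → ℚ := fun k => max (y k) 0 with hQ
  have hPQ : ∀ k, P k = Q k - y k := by
    intro k; simp only [hP, hQ]
    rcases le_total (y k) 0 with h | h
    · rw [max_eq_left (by linarith), max_eq_right h]; ring
    · rw [max_eq_right (by linarith), max_eq_left h]; ring
  have hP0 : ∀ k, 0 ≤ P k := fun k => le_max_right _ _
  have hQ0 : ∀ k, 0 ≤ Q k := fun k => le_max_right _ _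
  have hPQ0 : ∀ k, P k * Q k = 0 := by
    intro k; simp only [hP, hQ]
    rcases le_total (y k) 0 with h | h
    · rw [max_eq_right h, mul_zero]
    · rw [max_eq_right (by linarith : -(y k) ≤ 0), zero_mul]
  have hkey : 0 ≤ ∑ i, ∑ j, P i * A i j * P j := by
    have hsplit : ∑ i, ∑ j, P i * A i j * P j
        = (∑ i, ∑ j, P i * A i j * Q j) + ∑ i, P i := by
      rw [← Finset.sum_add_distrib]
      congr 1; funext i
      have : ∑ j, P i * A i j * P j
          = (∑ j, P i * A i j * Q j) - P i * (∑ j, A i j * y j) := by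
        rw [Finset.mul_sum, ← Finset.sum_sub_distrib]
        congr 1; funext j
        rw [hPQ j]; ring
      rw [this, hy i]; ring
    rw [hsplit]
    apply add_nonneg
    · apply Finset.sum_nonneg; intro i _
      apply Finset.sum_nonneg; intro j _
      rcases eq_or_ne i j with rfl | hij
      · have : P i * A i i * Q i = A i i * (P i * Q i) := by ring
        rw [this, hPQ0 i, mul_zero]
      · exact mul_nonneg (mul_nonneg (hP0 i) (hoff i j hij)) (hQ0 j)
    · exact Finset.sum_nonneg fun i _ => hP0 i
  have hPzero : P = 0 := by
    by_contra h
    exact absurd hkey (not_le.mpr (hratneg P h))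
  have hy0 : ∀ k, 0 ≤ y k := by
    intro k
    have : P k = 0 := congrFun hPzero k
    simp only [hP] at this
    by_contra h
    push_neg at h
    rw [max_eq_left (by linarith)] at this
    linarith
  intro k
  rcases lt_or_eq_of_le (hy0 k) with h | h
  · exact h
  · exfalso
    have h1 := hy k
    have : 0 ≤ ∑ t, A k t * y t := by
      apply Finset.sum_nonneg; intro t _
      rcases eq_or_ne t k with rfl | htk
      · rw [← h, mul_zero]
      · exact mul_nonneg (hoff k t (Ne.symm htk)) (hy0 t)
    linarith

/-- Clearing denominators. -/
lemma exists_int_multiple {n : ℕ} (y : Fin n → ℚ) :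
    ∃ d : ℕ, 0 < d ∧ ∃ z : Fin n → ℤ, ∀ k, (z k : ℚ) = (d : ℚ) * y k := by
  refine ⟨∏ k, (y k).den, Finset.prod_pos fun k _ => (y k).pos, ?_⟩
  refine ⟨fun k => ((∏ t, (y t).den) / (y k).den : ℕ) * (y k).num, fun k => ?_⟩
  obtain ⟨c, hc⟩ : (y k).den ∣ ∏ t, (y t).den :=
    Finset.dvd_prod_of_mem _ (Finset.mem_univ k)
  simp only [hc]
  rw [Nat.mul_div_cancel_left _ (y k).pos]
  have hnum : ((y k).den : ℚ) * y k = (y k).num := by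
    rw [mul_comm, Rat.mul_den_eq_num]
  push_cast
  rw [mul_comm ((y k).den : ℚ) (c:ℚ), mul_assoc, hnum]

theorem separation_of_components (n : ℕ) (hn : 2 ≤ n) (A : Matrix (Fin n) (Fin n) ℚ)
    (hsym : ∀ i j, A i j = A j i) (hdiag : ∀ i, A i i < 0)
    (hoff : ∀ i j, i ≠ j → 0 ≤ A i j) (hneg : NegDefQ A) :
    ∀ C : Fin n → ℚ, (∀ k, C k ≤ 0) → ∀ i j : Fin n, i ≠ j →
      ∃ X : Fin n → ℤ, (∀ k, 0 < X k) ∧ (∀ k, ∑ t, A k t * (X t : ℚ) ≤ C k) ∧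
        X i ≠ X j := by
  intro C hC i j hij
  obtain ⟨y, hy⟩ := exists_solution A hneg
  have hypos : ∀ k, 0 < y k := solution_pos A hoff (ratneg_of_NegDefQ A hneg) y hy
  obtain ⟨d, hd, z, hz⟩ := exists_int_multiple y
  have hzpos : ∀ k, 0 < z k := by
    intro k
    have : (0:ℚ) < (z k : ℚ) := by
      rw [hz k]
      exact mul_pos (by exact_mod_cast hd) (hypos k)
    exact_mod_cast this
  have hAz : ∀ k, ∑ t, A k t * (z t : ℚ) = -(d : ℚ) := by
    intro k
    calc ∑ t, A k t * (z t : ℚ) = (d : ℚ) * ∑ t, A k t * y t := by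
          rw [Finset.mul_sum]; congr 1; funext t; rw [hz t]; ring
      _ = -(d : ℚ) := by rw [hy k]; ring
  -- choose the perturbation amount
  set c : ℤ := if z i = z j then 1 else 0 with hc
  -- choose N large enough
  have hne : (Finset.univ : Finset (Fin n)).Nonempty :=
    ⟨⟨0, by omega⟩, Finset.mem_univ _⟩
  obtain ⟨N, hN⟩ :=
    exists_nat_gt (Finset.univ.sup' hne (fun k => (max (A k i) 0 - C k) / (d : ℚ)))
  set M : ℕ := N + 1 with hM
  have hMpos : 0 < M := Nat.succ_pos N
  have hdpos : (0:ℚ) < (d:ℚ) := by exact_mod_cast hd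
  have hMge : ∀ k, max (A k i) 0 - C k ≤ (M : ℚ) * (d : ℚ) := by
    intro k
    have h1 : (max (A k i) 0 - C k) / (d : ℚ)
        ≤ Finset.univ.sup' hne (fun k => (max (A k i) 0 - C k) / (d : ℚ)) :=
      Finset.le_sup' (fun k => (max (A k i) 0 - C k) / (d : ℚ)) (Finset.mem_univ k)
    have h2 : (N : ℚ) ≤ (M : ℚ) := by exact_mod_cast Nat.le_succ N
    have h3 : (max (A k i) 0 - C k) / (d : ℚ) ≤ (M : ℚ) := by linarith
    rw [div_le_iff₀ hdpos] at h3
    exact h3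
  have hc0 : (0:ℤ) ≤ c := by rw [hc]; split <;> norm_num
  have hcle : (c:ℚ) ≤ 1 := by rw [hc]; split <;> norm_num
  have hc0q : (0:ℚ) ≤ (c:ℚ) := by exact_mod_cast hc0
  refine ⟨fun k => (M : ℤ) * z k + if k = i then c else 0, ?_, ?_, ?_⟩
  · intro k
    show 0 < (M : ℤ) * z k + if k = i then c else 0
    have h1 : 0 < (M : ℤ) * z k :=
      mul_pos (by exact_mod_cast hMpos) (hzpos k)
    have h2 : (0:ℤ) ≤ if k = i then c else 0 := by split <;> simp [hc0]
    linarith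
  · intro k
    have hsum : ∑ t, A k t * (((M : ℤ) * z t + if t = i then c else 0 : ℤ) : ℚ)
        = (M : ℚ) * (-(d:ℚ)) + A k i * (c : ℚ) := by
      have heach : ∀ t, A k t * (((M : ℤ) * z t + if t = i then c else 0 : ℤ) : ℚ)
          = (M : ℚ) * (A k t * (z t : ℚ)) + (if t = i then A k t * (c:ℚ) else 0) := by
        intro t
        rcases eq_or_ne t i with rfl | h
        · simp only [if_pos rfl]; push_cast; ring
        · simp only [if_neg h]; push_cast; ring
      rw [Finset.sum_congr rfl (fun t _ => heach t), Finset.sum_add_distrib,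
        ← Finset.mul_sum, hAz k, Finset.sum_ite_eq' Finset.univ i
          (fun t => A k t * (c:ℚ))]
      simp
    rw [hsum]
    have h3 := hMge k
    have h4 : A k i * (c:ℚ) ≤ max (A k i) 0 := by
      rcases le_total (A k i) 0 with hA | hA
      · nlinarith [le_max_right (A k i) (0:ℚ)]
      · nlinarith [le_max_left (A k i) (0:ℚ)]
    linarith
  · intro h
    simp only [if_pos rfl, if_neg (Ne.symm hij), add_zero] at h
    rcases eq_or_ne (z i) (z j) with hzeq | hzne
    · rw [hc, hzeq] at h
      simp at h
    · simp only [hc, if_neg hzne, if_true, add_zero] at h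
      exact hzne (mul_left_cancel₀
        (by exact_mod_cast hMpos.ne' : (M:ℤ) ≠ 0) h)
end

section
/- Let C ∈ ℚⁿ be a vector with all entries ≤ 0. Then: (1) there exists a vector X ∈ ℤⁿ with all entries > 0 such that (AX)_k ≤ C_k for all k and X_1 < X_2, if and only if a^{(2)}_{1,2} < −a^{(2)}_{1,1}; (2) there exists such an X with X_2 < X_1 if and only if a^{(2)}_{1,2} < −a^{(2)}_{2,2}. -/
/-- One step of Gauss elimination with pivot `p`. -/
def gaussStep (b : ℕ → ℕ → ℚ) (p : ℕ) : ℕ → ℕ → ℚ :=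
  fun i j => b i j - b p i * b p j / b p p

/-- Iterated Gauss steps with pivots `n-1, n-2, …` (0-based). -/
def gaussIter (b : ℕ → ℕ → ℚ) (n : ℕ) : ℕ → ℕ → ℕ → ℚ
  | 0 => b
  | k + 1 => gaussStep (gaussIter b n k) (n - 1 - k)

/-- The entries of `A` as a function on `ℕ` (0-based), junk value `0` out of range. -/
def entries {n : ℕ} (A : Matrix (Fin n) (Fin n) ℚ) : ℕ → ℕ → ℚ :=
  fun i j => if h : i < n ∧ j < n then A ⟨i, h.1⟩ ⟨j, h.2⟩ else 0

/-- `gaussSeq A l` is the Gauss sequence matrix `A^{(l)}` (0-based indices, so the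
meaningful entries are those with indices `< l`; `gaussSeq A n = A`). -/
def gaussSeq {n : ℕ} (A : Matrix (Fin n) (Fin n) ℚ) (l : ℕ) : ℕ → ℕ → ℚ :=
  gaussIter (entries A) n (n - l)

/-- `CSum A l i = C(A)^{(l)}_{i+1} = ∑_{j=1}^{l} a^{(l)}_{i+1,j}` (0-based `i < l`). -/
def CSum {n : ℕ} (A : Matrix (Fin n) (Fin n) ℚ) (l i : ℕ) : ℚ :=
  ∑ j ∈ Finset.range l, gaussSeq A l i j

/-!
Each Gauss step is a Schur complement with a negative pivot, so every `A^{(l)}` is again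
symmetric, nonnegative off the diagonal and negative definite. Row `i` of `A^{(l)}` applied to
`x` is row `i` of `A^{(l+1)}` plus the nonnegative multiple
`-a^{(l+1)}_{l+1,i} / a^{(l+1)}_{l+1,l+1}` of the pivot row. Hence a vector with nonpositive rows
for `A` has nonpositive rows for `A^{(2)}`, which forces `a^{(2)}_{1,2} < -a^{(2)}_{1,1}` as soon
as `X_1 < X_2`. Conversely a positive vector with negative rows for `A^{(l)}` extends to one for
`A^{(l+1)}`: give the new coordinate slightly more than the value that cancels the pivot row.
So a positive `(u, w)`, `u < w`, with negative rows for the `2 × 2` matrix `A^{(2)}` (it exists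
when `a^{(2)}_{1,2} < -a^{(2)}_{1,1}`, since `det A^{(2)} > 0`) lifts to all of `A`, and scaling
by a large common multiple of the denominators gives `X`.
-/

open Finset Filter Topology

theorem sum_sum_mul_mul_eq_sum_mul_sum (b : ℕ → ℕ → ℚ) (x : ℕ → ℚ) (m : ℕ) :
    ∑ i ∈ range m, ∑ j ∈ range m, x i * b i j * x j =
      ∑ i ∈ range m, x i * ∑ j ∈ range m, b i j * x j := by
  simp only [mul_sum, mul_assoc]

/-- The leading `l × l` block of `-b` is a Stieltjes matrix. -/
structure IsNegStieltjes (b : ℕ → ℕ → ℚ) (l : ℕ) : Prop where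
  symm : ∀ i < l, ∀ j < l, b i j = b j i
  nonneg : ∀ i < l, ∀ j < l, i ≠ j → 0 ≤ b i j
  quad_neg : ∀ x : ℕ → ℚ, (∃ i < l, x i ≠ 0) →
    ∑ i ∈ range l, ∑ j ∈ range l, x i * b i j * x j < 0

theorem sum_gaussStep_mul {b : ℕ → ℕ → ℚ} {l i : ℕ} (hl : b l l ≠ 0) (hil : b i l = b l i)
    (x : ℕ → ℚ) :
    ∑ t ∈ range l, gaussStep b l i t * x t =
      ∑ t ∈ range (l + 1), b i t * x t - b l i / b l l * ∑ t ∈ range (l + 1), b l t * x t := by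
  simp only [gaussStep, sub_mul, sum_sub_distrib, sum_range_succ, mul_add, mul_sum]
  rw [hil]
  field_simp
  ring

theorem sum_mul_update_pivot (b : ℕ → ℕ → ℚ) {l : ℕ} (hl : b l l ≠ 0) (x : ℕ → ℚ) (ε : ℚ) :
    ∑ t ∈ range (l + 1),
        b l t * Function.update x l (-(∑ t ∈ range l, b l t * x t) / b l l + ε) t =
      b l l * ε := by
  rw [sum_range_succ, Function.update_self,
    sum_congr rfl fun t ht => by rw [Function.update_of_ne (mem_range.1 ht).ne]]
  field_simp
  ring

namespace IsNegStieltjes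

variable {b : ℕ → ℕ → ℚ} {l : ℕ}

theorem diag_neg (h : IsNegStieltjes b l) {i : ℕ} (hi : i < l) : b i i < 0 := by
  simpa [Pi.single_apply, hi] using h.quad_neg (Pi.single i 1) ⟨i, hi, by simp⟩

theorem mul_self_lt_mul (h : IsNegStieltjes b 2) : b 0 1 * b 0 1 < b 0 0 * b 1 1 := by
  have h11 := h.diag_neg (i := 1) (by norm_num)
  have hq := h.quad_neg (fun t => if t = 0 then -b 1 1 else b 0 1)
    ⟨0, by norm_num, by simpa using h11.ne⟩
  simp only [sum_range_succ, sum_range_zero, zero_add, if_pos, one_ne_zero, if_false,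
    h.symm 1 (by norm_num) 0 (by norm_num)] at hq
  nlinarith

theorem gaussStep (h : IsNegStieltjes b (l + 1)) : IsNegStieltjes (gaussStep b l) l where
  symm i hi j hj := by
    simp only [_root_.gaussStep, h.symm i (by omega) j (by omega)]
    ring
  nonneg i hi j hj hij := by
    have hli := h.nonneg l (by omega) i (by omega) (by omega)
    have hlj := h.nonneg l (by omega) j (by omega) (by omega)
    have := div_nonpos_of_nonneg_of_nonpos (mul_nonneg hli hlj) (h.diag_neg l.lt_succ_self).le
    simp only [_root_.gaussStep]
    linarith [h.nonneg i (by omega) j (by omega) hij]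
  quad_neg x := by
    rintro ⟨k, hk, hxk⟩
    have hll := (h.diag_neg l.lt_succ_self).ne
    -- extend `x` by the value at the pivot that kills the pivot row; the form is unchanged
    set y := Function.update x l (-(∑ t ∈ range l, b l t * x t) / b l l)
    have hyx : ∀ t < l, y t = x t := fun t ht => Function.update_of_ne ht.ne _ _
    have hyl : ∑ t ∈ range (l + 1), b l t * y t = 0 := by
      simpa only [add_zero, mul_zero] using sum_mul_update_pivot b hll x 0
    calc ∑ i ∈ range l, ∑ j ∈ range l, x i * _root_.gaussStep b l i j * x j
        = ∑ i ∈ range l, ∑ j ∈ range l, y i * _root_.gaussStep b l i j * y j := by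
          refine sum_congr rfl fun i hi => sum_congr rfl fun j hj => ?_
          rw [hyx i (mem_range.1 hi), hyx j (mem_range.1 hj)]
      _ = ∑ i ∈ range (l + 1), y i * ∑ j ∈ range (l + 1), b i j * y j := by
          rw [sum_sum_mul_mul_eq_sum_mul_sum, sum_range_succ _ l, hyl, mul_zero, add_zero]
          refine sum_congr rfl fun i hi => ?_
          rw [sum_gaussStep_mul hll (h.symm i (by simp at hi; omega) l (by omega)), hyl]
          ring
      _ < 0 := by
          rw [← sum_sum_mul_mul_eq_sum_mul_sum]
          exact h.quad_neg y ⟨k, by omega, by rwa [hyx k hk]⟩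

theorem sum_gaussStep_mul_nonpos (h : IsNegStieltjes b (l + 1)) {x : ℕ → ℚ}
    (hx : ∀ i < l + 1, ∑ t ∈ range (l + 1), b i t * x t ≤ 0) {i : ℕ} (hi : i < l) :
    ∑ t ∈ range l, _root_.gaussStep b l i t * x t ≤ 0 := by
  have hll := h.diag_neg l.lt_succ_self
  have hq : b l i / b l l ≤ 0 :=
    div_nonpos_of_nonneg_of_nonpos (h.nonneg l (by omega) i (by omega) (by omega)) hll.le
  rw [sum_gaussStep_mul hll.ne (h.symm i (by omega) l (by omega))]
  nlinarith [hx i (by omega), hx l l.lt_succ_self]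

theorem exists_extension (h : IsNegStieltjes b (l + 1)) {x : ℕ → ℚ} (hx : ∀ t < l, 0 < x t)
    (hrow : ∀ i < l, ∑ t ∈ range l, _root_.gaussStep b l i t * x t < 0) :
    ∃ y : ℕ → ℚ, (∀ t < l + 1, 0 < y t) ∧
      (∀ i < l + 1, ∑ t ∈ range (l + 1), b i t * y t < 0) ∧ ∀ t < l, y t = x t := by
  have hll := h.diag_neg l.lt_succ_self
  obtain ⟨ε, hε_rows, hε⟩ : ∃ ε : ℚ,
      (∀ i ∈ range l, ∑ t ∈ range l, _root_.gaussStep b l i t * x t + b l i * ε < 0) ∧ 0 < ε := by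
    have : ∀ᶠ ε in 𝓝 (0 : ℚ),
        ∀ i ∈ range l, ∑ t ∈ range l, _root_.gaussStep b l i t * x t + b l i * ε < 0 :=
      (eventually_all_finset _).2 fun i hi => ContinuousAt.eventually_lt (by fun_prop)
        continuousAt_const (by simpa using hrow i (mem_range.1 hi))
    exact ((this.filter_mono nhdsWithin_le_nhds).and self_mem_nhdsWithin).exists (f := 𝓝[>] 0)
  have hs : 0 ≤ (∑ t ∈ range l, b l t * x t) / -b l l := by
    refine div_nonneg (sum_nonneg fun t ht => ?_) (by linarith)
    have ht := mem_range.1 ht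
    exact mul_nonneg (h.nonneg l (by omega) t (by omega) (by omega)) (hx t ht).le
  set y := Function.update x l (-(∑ t ∈ range l, b l t * x t) / b l l + ε)
  have hyx : ∀ t < l, y t = x t := fun t ht => Function.update_of_ne ht.ne _ _
  have hyl : ∑ t ∈ range (l + 1), b l t * y t = b l l * ε := sum_mul_update_pivot b hll.ne x ε
  refine ⟨y, fun t ht => ?_, fun i hi => ?_, hyx⟩
  · rcases (Nat.lt_succ_iff.1 ht).lt_or_eq with ht | rfl
    · rw [hyx t ht]
      exact hx t ht
    · simp only [y, Function.update_self, neg_div, ← div_neg]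
      linarith
  · rcases (Nat.lt_succ_iff.1 hi).lt_or_eq with hi | rfl
    · have hstep := sum_gaussStep_mul hll.ne (h.symm i (by omega) l (by omega)) y
      rw [hyl, sum_congr rfl fun t ht => by rw [hyx t (mem_range.1 ht)]] at hstep
      have := hε_rows i (mem_range.2 hi)
      have hcancel : b l i / b l l * (b l l * ε) = b l i * ε := by
        field_simp [hll.ne]
      linarith
    · rw [hyl]
      exact mul_neg_of_neg_of_pos hll hε

end IsNegStieltjes

section GaussSeq

variable {n : ℕ} (A : Matrix (Fin n) (Fin n) ℚ)

theorem gaussSeq_self : gaussSeq A n = entries A := by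
  simp [gaussSeq, gaussIter]

theorem gaussSeq_of_lt {l : ℕ} (hl : l < n) :
    gaussSeq A l = gaussStep (gaussSeq A (l + 1)) l := by
  rw [gaussSeq, gaussSeq, show n - l = n - (l + 1) + 1 by omega, gaussIter,
    show n - 1 - (n - (l + 1)) = l by omega]

theorem sum_range_entries_mul (k : Fin n) (x : ℕ → ℚ) :
    ∑ t ∈ range n, entries A k t * x t = ∑ t : Fin n, A k t * x t := by
  rw [← Fin.sum_univ_eq_sum_range]
  simp [entries]

theorem isNegStieltjes_entries (hsym : ∀ i j, A i j = A j i)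
    (hoff : ∀ i j, i ≠ j → 0 ≤ A i j) (hneg : NegDefQ A) : IsNegStieltjes (entries A) n where
  symm i hi j hj := by simp [entries, hi, hj, hsym ⟨i, hi⟩ ⟨j, hj⟩]
  nonneg i hi j hj hij := by simpa [entries, hi, hj] using hoff ⟨i, hi⟩ ⟨j, hj⟩ (by simpa using hij)
  quad_neg x := by
    rintro ⟨k, hk, hxk⟩
    have hx : (fun t : Fin n => (x t : ℝ)) ≠ 0 := fun h => hxk (by simpa using congrFun h ⟨k, hk⟩)
    have key : ∑ i : Fin n, ∑ j : Fin n, x i * A i j * x j < 0 := by exact_mod_cast hneg _ hx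
    rw [← Fin.sum_univ_eq_sum_range]
    simp_rw [← Fin.sum_univ_eq_sum_range (fun j => x _ * entries A _ j * x j)]
    simpa [entries] using key

variable {A}

theorem isNegStieltjes_gaussSeq (hA : IsNegStieltjes (entries A) n) {l : ℕ} (hl : l ≤ n) :
    IsNegStieltjes (gaussSeq A l) l := by
  induction hl using Nat.decreasingInduction with
  | self => rwa [gaussSeq_self]
  | of_succ l hl ih => rw [gaussSeq_of_lt A hl]; exact ih.gaussStep

theorem sum_gaussSeq_mul_nonpos (hA : IsNegStieltjes (entries A) n) {x : ℕ → ℚ}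
    (hx : ∀ k : Fin n, ∑ t : Fin n, A k t * x t ≤ 0) {l : ℕ} (hl : l ≤ n) :
    ∀ i < l, ∑ t ∈ range l, gaussSeq A l i t * x t ≤ 0 := by
  induction hl using Nat.decreasingInduction with
  | self =>
    intro i hi
    rw [gaussSeq_self]
    exact (sum_range_entries_mul A ⟨i, hi⟩ x).trans_le (hx _)
  | of_succ l hl ih =>
    intro i hi
    rw [gaussSeq_of_lt A hl]
    exact (isNegStieltjes_gaussSeq hA hl).sum_gaussStep_mul_nonpos ih hi

theorem exists_extension_of_gaussSeq (hA : IsNegStieltjes (entries A) n) {l : ℕ} (hl : l ≤ n)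
    {x : ℕ → ℚ} (hx : ∀ t < l, 0 < x t)
    (hrow : ∀ i < l, ∑ t ∈ range l, gaussSeq A l i t * x t < 0) :
    ∃ y : ℕ → ℚ, (∀ t : Fin n, 0 < y t) ∧ (∀ k : Fin n, ∑ t : Fin n, A k t * y t < 0) ∧
      ∀ t < l, y t = x t := by
  induction hl using Nat.decreasingInduction generalizing x with
  | self =>
    refine ⟨x, fun t => hx t t.isLt, fun k => ?_, fun _ _ => rfl⟩
    rw [← sum_range_entries_mul, ← gaussSeq_self]
    exact hrow k k.isLt
  | of_succ l hl ih =>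
    rw [gaussSeq_of_lt A hl] at hrow
    obtain ⟨y, hy, hyrow, hyx⟩ := (isNegStieltjes_gaussSeq hA hl).exists_extension hx hrow
    obtain ⟨z, hz, hzrow, hzy⟩ := ih hy hyrow
    exact ⟨z, hz, hzrow, fun t ht => (hzy t (by omega)).trans (hyx t ht)⟩

end GaussSeq

theorem exists_nat_mul_eq_intCast {V : Type*} [Fintype V] (y : V → ℚ) :
    ∃ D : ℕ, 0 < D ∧ ∃ z : V → ℤ, ∀ t, (z t : ℚ) = D * y t := by
  classical
  refine ⟨∏ t, (y t).den, prod_pos fun t _ => (y t).pos,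
    fun t => (y t).num * ∏ s ∈ univ.erase t, (y s).den, fun t => ?_⟩
  rw [← mul_prod_erase univ (fun s => (y s).den) (mem_univ t)]
  push_cast
  rw [← Rat.mul_den_eq_num]
  ring

theorem exists_int_mul_le_of_mul_neg {V : Type*} [Fintype V] (A : Matrix V V ℚ) {y : V → ℚ}
    (hy : ∀ t, 0 < y t) (hAy : ∀ k, ∑ t, A k t * y t < 0) (C : V → ℚ) :
    ∃ X : V → ℤ, (∀ k, 0 < X k) ∧ (∀ k, ∑ t, A k t * (X t : ℚ) ≤ C k) ∧
      ∃ c : ℚ, 0 < c ∧ ∀ t, (X t : ℚ) = c * y t := by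
  obtain ⟨D, hD, z, hz⟩ := exists_nat_mul_eq_intCast y
  obtain ⟨M, hM, hMC⟩ : ∃ M : ℕ, 1 ≤ M ∧ ∀ k, (M : ℚ) * D * ∑ t, A k t * y t ≤ C k :=
    ((eventually_ge_atTop 1).and (eventually_all.2 fun k =>
      ((tendsto_natCast_atTop_atTop.atTop_mul_const (by positivity)).atTop_mul_const_of_neg
        (hAy k)).eventually_le_atBot (C k))).exists
  have hX : ∀ t, ((M * z t : ℤ) : ℚ) = M * D * y t := fun t => by
    push_cast [hz]
    ring
  refine ⟨fun t => M * z t, fun k => ?_, fun k => ?_, M * D, by positivity, hX⟩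
  · have : (0 : ℚ) < M * D * y k := by have := hy k; positivity
    exact_mod_cast (hX k).symm ▸ this
  · simpa only [hX, mul_left_comm _ (M * D : ℚ), ← mul_sum] using hMC k

section TwoByTwo

variable {K : Type*} [Field K] [LinearOrder K] [IsStrictOrderedRing K] {a b c u w : K}

theorem lt_neg_of_mul_add_mul_nonpos (ha : a < 0) (hu : 0 < u) (huw : u < w)
    (h : a * u + b * w ≤ 0) : b < -a := by
  nlinarith

theorem exists_lt_of_lt_neg (ha : a < 0) (hb : 0 ≤ b) (hdet : b * b < a * c) (h : b < -a) :
    ∃ u w : K, 0 < u ∧ u < w ∧ a * u + b * w < 0 ∧ b * u + c * w < 0 := by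
  have hc : c < 0 := by nlinarith
  have hdiag : a + c + 2 * b < 0 := by nlinarith
  -- `(u, w)` is the adjugate of `[a b; b c]` applied to `(a + b, a + c + 2b)`,
  -- so its image is `(a c - b²) (a + b, a + c + 2b)`
  refine ⟨a * c - a * b - 2 * b * b, a * a + a * b + a * c - b * b, ?_, ?_, ?_, ?_⟩ <;>
    nlinarith

end TwoByTwo

section GaussSeqTwo

variable {n : ℕ} {A : Matrix (Fin n) (Fin n) ℚ}

theorem gaussSeq_two_mul_nonpos (hA : IsNegStieltjes (entries A) n) (hn : 2 ≤ n)
    {X : Fin n → ℚ} (hX : ∀ k, ∑ t, A k t * X t ≤ 0) :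
    gaussSeq A 2 0 0 * X ⟨0, zero_lt_two.trans_le hn⟩ +
        gaussSeq A 2 0 1 * X ⟨1, one_lt_two.trans_le hn⟩ ≤ 0 ∧
      gaussSeq A 2 0 1 * X ⟨0, zero_lt_two.trans_le hn⟩ +
        gaussSeq A 2 1 1 * X ⟨1, one_lt_two.trans_le hn⟩ ≤ 0 := by
  set x : ℕ → ℚ := fun t => if h : t < n then X ⟨t, h⟩ else 0
  have hrow := sum_gaussSeq_mul_nonpos hA (x := x) (by simpa [x] using hX) hn
  have hsymm := (isNegStieltjes_gaussSeq hA hn).symm 1 (by norm_num) 0 (by norm_num)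
  have h0 := hrow 0 (by norm_num)
  have h1 := hrow 1 (by norm_num)
  simp only [sum_range_succ, sum_range_zero, zero_add, hsymm, x, dif_pos (zero_lt_two.trans_le hn),
    dif_pos (one_lt_two.trans_le hn)] at h0 h1
  exact ⟨h0, h1⟩

theorem exists_int_of_gaussSeq_two (hA : IsNegStieltjes (entries A) n) (hn : 2 ≤ n)
    {u w : ℚ} (hu : 0 < u) (hw : 0 < w) (h0 : gaussSeq A 2 0 0 * u + gaussSeq A 2 0 1 * w < 0)
    (h1 : gaussSeq A 2 0 1 * u + gaussSeq A 2 1 1 * w < 0) (C : Fin n → ℚ) :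
    ∃ X : Fin n → ℤ, (∀ k, 0 < X k) ∧ (∀ k, ∑ t, A k t * (X t : ℚ) ≤ C k) ∧
      ∃ c : ℚ, 0 < c ∧ (X ⟨0, zero_lt_two.trans_le hn⟩ : ℚ) = c * u ∧
        (X ⟨1, one_lt_two.trans_le hn⟩ : ℚ) = c * w := by
  have hsymm := (isNegStieltjes_gaussSeq hA hn).symm 1 (by norm_num) 0 (by norm_num)
  obtain ⟨y, hy, hyrow, hyx⟩ := exists_extension_of_gaussSeq hA hn
    (x := fun t => if t = 0 then u else w) (fun t _ => by split_ifs <;> assumption)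
    (fun i hi => by interval_cases i <;> simpa [sum_range_succ, hsymm])
  obtain ⟨X, hXpos, hXC, c, hc, hX⟩ := exists_int_mul_le_of_mul_neg A (y := fun t => y t) hy hyrow C
  exact ⟨X, hXpos, hXC, c, hc, by simp [hX, hyx 0], by simp [hX, hyx 1]⟩

end GaussSeqTwo

theorem gauss_two_by_two_criterion (n : ℕ) (hn : 2 ≤ n) (A : Matrix (Fin n) (Fin n) ℚ)
    (hsym : ∀ i j, A i j = A j i)
    (hoff : ∀ i j, i ≠ j → 0 ≤ A i j) (hneg : NegDefQ A)
    (C : Fin n → ℚ) (hC : ∀ k, C k ≤ 0) :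
    ((∃ X : Fin n → ℤ, (∀ k, 0 < X k) ∧ (∀ k, ∑ t, A k t * (X t : ℚ) ≤ C k) ∧
        X ⟨0, by omega⟩ < X ⟨1, by omega⟩) ↔
      gaussSeq A 2 0 1 < -(gaussSeq A 2 0 0)) ∧
    ((∃ X : Fin n → ℤ, (∀ k, 0 < X k) ∧ (∀ k, ∑ t, A k t * (X t : ℚ) ≤ C k) ∧
        X ⟨1, by omega⟩ < X ⟨0, by omega⟩) ↔
      gaussSeq A 2 0 1 < -(gaussSeq A 2 1 1)) := by
  have hA := isNegStieltjes_entries A hsym hoff hneg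
  have h2 := isNegStieltjes_gaussSeq hA hn
  set a := gaussSeq A 2 0 0
  set b := gaussSeq A 2 0 1
  set c := gaussSeq A 2 1 1
  have ha : a < 0 := h2.diag_neg (by norm_num)
  have hc : c < 0 := h2.diag_neg (by norm_num)
  have hb : 0 ≤ b := h2.nonneg 0 (by norm_num) 1 (by norm_num) (by norm_num)
  have hdet : b * b < a * c := h2.mul_self_lt_mul
  have hrows (X : Fin n → ℤ) (hX : ∀ k, ∑ t, A k t * (X t : ℚ) ≤ C k) :
      a * X ⟨0, by omega⟩ + b * X ⟨1, by omega⟩ ≤ 0 ∧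
        b * X ⟨0, by omega⟩ + c * X ⟨1, by omega⟩ ≤ 0 :=
    gaussSeq_two_mul_nonpos hA hn fun k => (hX k).trans (hC k)
  refine ⟨⟨?_, fun h => ?_⟩, ⟨?_, fun h => ?_⟩⟩
  · rintro ⟨X, hXpos, hX, hlt⟩
    exact lt_neg_of_mul_add_mul_nonpos ha (by exact_mod_cast hXpos _) (by exact_mod_cast hlt)
      (hrows X hX).1
  · obtain ⟨u, w, hu, huw, h0, h1⟩ := exists_lt_of_lt_neg ha hb hdet h
    obtain ⟨X, hXpos, hX, s, hs, hX0, hX1⟩ :=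
      exists_int_of_gaussSeq_two hA hn hu (hu.trans huw) h0 h1 C
    refine ⟨X, hXpos, hX, ?_⟩
    exact_mod_cast hX0.trans_lt (hX1 ▸ mul_lt_mul_of_pos_left huw hs)
  · rintro ⟨X, hXpos, hX, hlt⟩
    exact lt_neg_of_mul_add_mul_nonpos (u := (X ⟨1, by omega⟩ : ℚ)) (w := X ⟨0, by omega⟩) hc
      (by exact_mod_cast hXpos _) (by exact_mod_cast hlt) (by linarith [(hrows X hX).2])
  · obtain ⟨u, w, hu, huw, h0, h1⟩ :=
      exists_lt_of_lt_neg (c := a) hc hb (mul_comm a c ▸ hdet) h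
    obtain ⟨X, hXpos, hX, s, hs, hX0, hX1⟩ :=
      exists_int_of_gaussSeq_two hA hn (hu.trans huw) hu (by linarith) (by linarith) C
    refine ⟨X, hXpos, hX, ?_⟩
    exact_mod_cast hX1.trans_lt (hX0 ▸ mul_lt_mul_of_pos_left huw hs)
end

section
/- Let 2 ≤ l ≤ n−1. If C(A)^{(l+1)}_i < 0 for all i = 1, …, l+1, then C(A)^{(l)}_i < 0 for all i = 1, …, l. -/
/-- The invariant preserved by Gauss elimination: symmetry, nonnegative off-diagonal
entries, and negative definiteness on the first `m` indices. -/
def GInv (b : ℕ → ℕ → ℚ) (m : ℕ) : Prop :=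
  (∀ i j, i < m → j < m → b i j = b j i) ∧
  (∀ i j, i < m → j < m → i ≠ j → 0 ≤ b i j) ∧
  (∀ x : ℕ → ℚ, (∃ i, i < m ∧ x i ≠ 0) →
    ∑ i ∈ Finset.range m, ∑ j ∈ Finset.range m, x i * b i j * x j < 0)

lemma GInv.diag {b : ℕ → ℕ → ℚ} {m : ℕ} (h : GInv b m) {i : ℕ} (hi : i < m) :
    b i i < 0 := by
  have := h.2.2 (fun j => if j = i then 1 else 0) ⟨i, hi, by simp⟩
  simpa [Finset.sum_ite_eq', Finset.mem_range, hi, mul_ite, ite_mul] using this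

lemma ginv_step (b : ℕ → ℕ → ℚ) (m : ℕ) (h : GInv b (m + 1)) :
    GInv (gaussStep b m) m := by
  obtain ⟨hsym, hoff, hneg⟩ := h
  have hmm : b m m < 0 := GInv.diag ⟨hsym, hoff, hneg⟩ (Nat.lt_succ_self m)
  have hmm' : b m m ≠ 0 := ne_of_lt hmm
  refine ⟨?_, ?_, ?_⟩
  · intro i j hi hj
    simp only [gaussStep]
    rw [hsym i j (hi.trans (Nat.lt_succ_self m)) (hj.trans (Nat.lt_succ_self m))]
    ring
  · intro i j hi hj hij
    simp only [gaussStep]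
    have h1 : 0 ≤ b m i := hoff m i (Nat.lt_succ_self m) (hi.trans (Nat.lt_succ_self m)) (Nat.ne_of_gt hi)
    have h2 : 0 ≤ b m j := hoff m j (Nat.lt_succ_self m) (hj.trans (Nat.lt_succ_self m)) (Nat.ne_of_gt hj)
    have h3 : 0 ≤ b i j := hoff i j (hi.trans (Nat.lt_succ_self m)) (hj.trans (Nat.lt_succ_self m)) hij
    have h4 : b m i * b m j / b m m ≤ 0 :=
      div_nonpos_of_nonneg_of_nonpos (mul_nonneg h1 h2) (le_of_lt hmm)
    linarith
  · intro x ⟨i0, hi0, hx0⟩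
    set s : ℚ := ∑ j ∈ Finset.range m, b m j * x j with hs
    set t : ℚ := -s / b m m with ht
    set y : ℕ → ℚ := Function.update x m t with hy
    have hyx : ∀ i, i < m → y i = x i := fun i hi =>
      Function.update_of_ne (Nat.ne_of_lt hi) _ _
    have hym : y m = t := Function.update_self _ _ _
    have key : ∑ i ∈ Finset.range m, ∑ j ∈ Finset.range m, x i * gaussStep b m i j * x j
        = ∑ i ∈ Finset.range (m+1), ∑ j ∈ Finset.range (m+1), y i * b i j * y j := by
      rw [Finset.sum_range_succ]
      simp only [Finset.sum_range_succ]
      have e1 : ∀ i ∈ Finset.range m,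
          (∑ j ∈ Finset.range m, y i * b i j * y j + y i * b i m * y m)
          = (∑ j ∈ Finset.range m, x i * b i j * x j) + x i * b m i * t := by
        intro i hi
        rw [Finset.mem_range] at hi
        rw [hyx i hi, hym, hsym i m (hi.trans (Nat.lt_succ_self m)) (Nat.lt_succ_self m)]
        congr 1
        exact Finset.sum_congr rfl fun j hj => by
          rw [hyx j (Finset.mem_range.mp hj)]
      rw [Finset.sum_congr rfl e1, Finset.sum_add_distrib]
      have e2 : (∑ j ∈ Finset.range m, y m * b m j * y j) = t * s := by
        rw [hym, hs, Finset.mul_sum]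
        exact Finset.sum_congr rfl fun j hj => by
          rw [hyx j (Finset.mem_range.mp hj)]; ring
      rw [e2, hym]
      have e3 : ∀ i ∈ Finset.range m,
          (∑ j ∈ Finset.range m, x i * gaussStep b m i j * x j)
          = (∑ j ∈ Finset.range m, x i * b i j * x j) - x i * b m i * s / b m m := by
        intro i hi
        simp only [gaussStep]
        rw [Finset.sum_congr rfl (fun j (hj : j ∈ Finset.range m) =>
          show x i * (b i j - b m i * b m j / b m m) * x j
              = x i * b i j * x j - x i * b m i / b m m * (b m j * x j) by ring),
          Finset.sum_sub_distrib, ← Finset.mul_sum, ← hs]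
        ring
      rw [Finset.sum_congr rfl e3, Finset.sum_sub_distrib]
      have e4 : (∑ i ∈ Finset.range m, x i * b m i * s / b m m)
          = s * s / b m m := by
        rw [← Finset.sum_div, ← Finset.sum_mul, hs]
        congr 2
        exact Finset.sum_congr rfl fun j _ => by ring
      have e5 : (∑ i ∈ Finset.range m, x i * b m i * t) = s * t := by
        rw [← Finset.sum_mul, hs]
        congr 1
        exact Finset.sum_congr rfl fun j _ => by ring
      rw [e4, e5, ht]
      field_simp
      ring
    rw [key]
    exact hneg y ⟨i0, hi0.trans (Nat.lt_succ_self m), by rw [hyx i0 hi0]; exact hx0⟩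

lemma ginv_base {n : ℕ} (A : Matrix (Fin n) (Fin n) ℚ)
    (hsym : ∀ i j, A i j = A j i)
    (hoff : ∀ i j, i ≠ j → 0 ≤ A i j) (hneg : NegDefQ A) :
    GInv (entries A) n := by
  refine ⟨?_, ?_, ?_⟩
  · intro i j hi hj
    simp [entries, hi, hj, hsym ⟨i, hi⟩ ⟨j, hj⟩]
  · intro i j hi hj hij
    have : (⟨i, hi⟩ : Fin n) ≠ ⟨j, hj⟩ := by simp [Fin.ext_iff, hij]
    simp [entries, hi, hj, hoff _ _ this]
  · intro x ⟨i0, hi0, hx0⟩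
    set xr : Fin n → ℝ := fun i => (x i : ℝ) with hxr
    have hxr0 : xr ≠ 0 := by
      intro hc
      apply hx0
      have := congrFun hc ⟨i0, hi0⟩
      simpa [hxr] using this
    have hlt := hneg xr hxr0
    have cast_eq : ((∑ i ∈ Finset.range n, ∑ j ∈ Finset.range n,
        x i * entries A i j * x j : ℚ) : ℝ)
        = ∑ i : Fin n, ∑ j : Fin n, xr i * (A i j : ℝ) * xr j := by
      push_cast
      rw [← Fin.sum_univ_eq_sum_range
        (fun i => ∑ j ∈ Finset.range n, (x i : ℝ) * ((entries A i j : ℚ) : ℝ) * (x j : ℝ)) n]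
      refine Finset.sum_congr rfl fun i _ => ?_
      rw [← Fin.sum_univ_eq_sum_range
        (fun j => (x (i : ℕ) : ℝ) * ((entries A (i : ℕ) j : ℚ) : ℝ) * (x j : ℝ)) n]
      refine Finset.sum_congr rfl fun j _ => ?_
      simp [entries, i.isLt, j.isLt, hxr]
    exact_mod_cast cast_eq ▸ hlt

lemma ginv_gaussSeq {n : ℕ} (A : Matrix (Fin n) (Fin n) ℚ)
    (hsym : ∀ i j, A i j = A j i)
    (hoff : ∀ i j, i ≠ j → 0 ≤ A i j) (hneg : NegDefQ A) :
    ∀ k, k ≤ n - 1 → GInv (gaussSeq A (n - k)) (n - k) := by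
  intro k
  induction k with
  | zero =>
    intro _
    have : gaussSeq A (n - 0) = entries A := by
      simp [gaussSeq, gaussIter]
    rw [Nat.sub_zero] at this ⊢
    rw [this]
    exact ginv_base A hsym hoff hneg
  | succ k ih =>
    intro hk
    have hk' : k ≤ n - 1 := le_of_lt (Nat.lt_of_succ_le hk)
    have hn1 : 1 ≤ n := by omega
    have ihh := ih hk'
    have e1 : n - (n - k) = k := by omega
    have e2 : n - (n - (k+1)) = k + 1 := by omega
    have e3 : n - 1 - k = n - (k + 1) := by omega
    have e4 : n - k = (n - (k+1)) + 1 := by omega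
    have : gaussSeq A (n - (k+1)) = gaussStep (gaussSeq A (n - k)) (n - (k+1)) := by
      rw [gaussSeq, gaussSeq, e1, e2, gaussIter, e3]
    rw [this]
    exact ginv_step _ _ (e4 ▸ ihh)

theorem csum_descends (n : ℕ) (hn : 2 ≤ n) (A : Matrix (Fin n) (Fin n) ℚ)
    (hsym : ∀ i j, A i j = A j i) (hdiag : ∀ i, A i i < 0)
    (hoff : ∀ i j, i ≠ j → 0 ≤ A i j) (hneg : NegDefQ A)
    (l : ℕ) (hl : 2 ≤ l) (hln : l ≤ n - 1) :
    (∀ i : ℕ, i < l + 1 → CSum A (l + 1) i < 0) →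
    (∀ i : ℕ, i < l → CSum A l i < 0) := by
  intro hC i hi
  have hl1n : l + 1 ≤ n := by omega
  have hginv : GInv (gaussSeq A (l + 1)) (l + 1) := by
    have := ginv_gaussSeq A hsym hoff hneg (n - (l + 1)) (by omega)
    rwa [show n - (n - (l+1)) = l + 1 by omega] at this
  set B : ℕ → ℕ → ℚ := gaussSeq A (l + 1) with hB
  have hstep : gaussSeq A l = gaussStep B l := by
    rw [gaussSeq, hB, gaussSeq, show n - l = (n - (l+1)) + 1 by omega, gaussIter,
      show n - 1 - (n - (l+1)) = l by omega]
  have hBll : B l l < 0 := hginv.diag (Nat.lt_succ_self l)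
  have hBll' : B l l ≠ 0 := ne_of_lt hBll
  have hBli : 0 ≤ B l i := hginv.2.1 l i (Nat.lt_succ_self l)
    (hi.trans (Nat.lt_succ_self l)) (Nat.ne_of_gt hi)
  have hBil : B i l = B l i := hginv.1 i l (hi.trans (Nat.lt_succ_self l)) (Nat.lt_succ_self l)
  have hCi : CSum A (l+1) i < 0 := hC i (hi.trans (Nat.lt_succ_self l))
  have hCl : CSum A (l+1) l < 0 := hC l (Nat.lt_succ_self l)
  have key : CSum A l i = CSum A (l+1) i - B l i * CSum A (l+1) l / B l l := by
    rw [CSum, hstep]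
    simp only [gaussStep]
    rw [Finset.sum_sub_distrib]
    have e1 : (∑ j ∈ Finset.range l, B l i * B l j / B l l)
        = B l i * ((∑ j ∈ Finset.range l, B l j)) / B l l := by
      rw [← Finset.sum_div, ← Finset.mul_sum]
    rw [e1]
    have e2 : (∑ j ∈ Finset.range l, B i j) = CSum A (l+1) i - B i l := by
      rw [CSum, ← hB, Finset.sum_range_succ]; ring
    have e3 : (∑ j ∈ Finset.range l, B l j) = CSum A (l+1) l - B l l := by
      rw [CSum, ← hB, Finset.sum_range_succ]; ring
    rw [e2, e3, hBil]
    field_simp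
    ring
  rw [key]
  have : 0 ≤ B l i * CSum A (l+1) l / B l l :=
    div_nonneg_of_nonpos (mul_nonpos_of_nonneg_of_nonpos hBli (le_of_lt hCl))
      (le_of_lt hBll)
  linarith
end

section
/- For a permutation σ of {1, …, n} let A^σ be the n×n matrix with entries (A^σ)_{i,j} = a_{σ(i),σ(j)} (which again satisfies the same hypotheses as A, so its Gauss sequence is defined). Then A satisfies (NN) if and only if there exists an integer l with 1 ≤ l ≤ n−1 such that for every permutation σ of {1, …, n}, C(A^σ)^{(l+1)}_i < 0 for all i = 1, …, l+1. -/
namespace NashAux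

open Finset

/-- rational negative-definiteness on the block `[0,m)` -/
def QND (g : ℕ → ℕ → ℚ) (m : ℕ) : Prop :=
  ∀ x : ℕ → ℚ, (∃ k, k < m ∧ x k ≠ 0) →
    ∑ i ∈ Finset.range m, ∑ j ∈ Finset.range m, x i * g i j * x j < 0

structure Good (g : ℕ → ℕ → ℚ) (m : ℕ) : Prop where
  symm : ∀ i j, g i j = g j i
  offd : ∀ i j, i < m → j < m → i ≠ j → 0 ≤ g i j
  qnd : QND g m

lemma Good.diag {g : ℕ → ℕ → ℚ} {m : ℕ} (h : Good g m) {i : ℕ} (hi : i < m) :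
    g i i < 0 := by
  have := h.qnd (fun k => if k = i then 1 else 0) ⟨i, hi, by simp⟩
  have key : ∑ i' ∈ Finset.range m, ∑ j' ∈ Finset.range m,
      (if i' = i then (1:ℚ) else 0) * g i' j' * (if j' = i then (1:ℚ) else 0) = g i i := by
    rw [Finset.sum_eq_single_of_mem i (Finset.mem_range.2 hi)]
    · rw [Finset.sum_eq_single_of_mem i (Finset.mem_range.2 hi)]
      · simp
      · intro j' _ hj'; simp [hj']
    · intro i' _ hi'
      apply Finset.sum_eq_zero
      intro j' _; simp [hi']
  rw [key] at this
  exact this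

lemma step_row_sum (b : ℕ → ℕ → ℚ) (hs : ∀ i j, b i j = b j i) (m : ℕ) (hbmm : b m m ≠ 0)
    (k : ℕ) (X : ℕ → ℚ) :
    ∑ j ∈ Finset.range m, gaussStep b m k j * X j
      = ∑ j ∈ Finset.range (m+1), b k j * X j
        - (b m k / b m m) * ∑ j ∈ Finset.range (m+1), b m j * X j := by
  rw [Finset.sum_range_succ, Finset.sum_range_succ]
  have h1 : ∀ j, gaussStep b m k j * X j
      = b k j * X j - (b m k / b m m) * (b m j * X j) := by
    intro j; simp only [gaussStep]; ring
  rw [Finset.sum_congr rfl (fun j _ => h1 j), Finset.sum_sub_distrib, ← Finset.mul_sum]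
  have h2 : b k m = b m k := hs k m
  rw [h2]
  field_simp
  ring

end NashAux
namespace NashAux
open Finset

lemma gaussStep_quad (b : ℕ → ℕ → ℚ) (hs : ∀ i j, b i j = b j i) (m : ℕ)
    (hbmm : b m m ≠ 0) (x : ℕ → ℚ) :
    ∑ i ∈ Finset.range m, ∑ j ∈ Finset.range m, x i * gaussStep b m i j * x j
      = ∑ i ∈ Finset.range (m+1), ∑ j ∈ Finset.range (m+1),
          (fun k => if k = m then (∑ j ∈ Finset.range m, b m j * x j) / (-(b m m)) else x k) i
            * b i j *
          (fun k => if k = m then (∑ j ∈ Finset.range m, b m j * x j) / (-(b m m)) else x k) j := by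
  set s : ℚ := ∑ j ∈ Finset.range m, b m j * x j with hsdef
  set t : ℚ := s / (-(b m m)) with htdef
  set x' : ℕ → ℚ := fun k => if k = m then t else x k with hx'def
  have hx'lt : ∀ k, k < m → x' k = x k := by
    intro k hk; simp only [hx'def]; rw [if_neg (Nat.ne_of_lt hk)]
  have hx'm : x' m = t := by simp [hx'def]
  -- LHS = Q - s*s/bmm
  have hL : ∑ i ∈ Finset.range m, ∑ j ∈ Finset.range m, x i * gaussStep b m i j * x j
      = (∑ i ∈ Finset.range m, ∑ j ∈ Finset.range m, x i * b i j * x j) - s * s / b m m := by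
    have inner : ∀ i, ∑ j ∈ Finset.range m, x i * gaussStep b m i j * x j
        = (∑ j ∈ Finset.range m, x i * b i j * x j) - (b m i * x i) * s / b m m := by
      intro i
      have h1 : ∀ j, x i * gaussStep b m i j * x j
          = x i * b i j * x j - (b m i * x i) * (b m j * x j) / b m m := by
        intro j; simp only [gaussStep]; ring
      rw [Finset.sum_congr rfl (fun j _ => h1 j), Finset.sum_sub_distrib]
      congr 1
      rw [hsdef, Finset.mul_sum, Finset.sum_div]
    rw [Finset.sum_congr rfl (fun i _ => inner i), Finset.sum_sub_distrib]
    congr 1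
    have : ∑ i ∈ Finset.range m, (b m i * x i) * s / b m m
        = (∑ i ∈ Finset.range m, b m i * x i) * s / b m m := by
      rw [Finset.sum_mul, Finset.sum_div]
    rw [this, hsdef]
  -- RHS = Q + 2 t s + bmm t^2
  have hR : ∑ i ∈ Finset.range (m+1), ∑ j ∈ Finset.range (m+1), x' i * b i j * x' j
      = (∑ i ∈ Finset.range m, ∑ j ∈ Finset.range m, x i * b i j * x j)
        + 2 * t * s + b m m * t ^ 2 := by
    rw [Finset.sum_range_succ]
    have inner1 : ∀ i ∈ Finset.range m, ∑ j ∈ Finset.range (m+1), x' i * b i j * x' j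
        = (∑ j ∈ Finset.range m, x i * b i j * x j) + x i * b i m * t := by
      intro i hi
      rw [Finset.sum_range_succ, hx'lt i (Finset.mem_range.1 hi), hx'm]
      congr 1
      exact Finset.sum_congr rfl (fun j hj => by rw [hx'lt j (Finset.mem_range.1 hj)])
    rw [Finset.sum_congr rfl inner1, Finset.sum_add_distrib]
    have inner2 : ∑ j ∈ Finset.range (m+1), x' m * b m j * x' j
        = t * s + t * (b m m) * t := by
      rw [Finset.sum_range_succ, hx'm]
      congr 1
      have : ∀ j ∈ Finset.range m, t * b m j * x' j = t * (b m j * x j) := by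
        intro j hj; rw [hx'lt j (Finset.mem_range.1 hj)]; ring
      rw [Finset.sum_congr rfl this, ← Finset.mul_sum]
    rw [inner2]
    have hcol : ∑ i ∈ Finset.range m, x i * b i m * t = s * t := by
      have : ∀ i ∈ Finset.range m, x i * b i m * t = (b m i * x i) * t := by
        intro i _; rw [hs i m]; ring
      rw [Finset.sum_congr rfl this, ← Finset.sum_mul, hsdef]
    rw [hcol]
    ring
  have hts : t = -(s / b m m) := by rw [htdef, div_neg]
  rw [hL, hR, hts]
  field_simp
  ring

lemma good_step {b : ℕ → ℕ → ℚ} {m : ℕ} (h : Good b (m+1)) :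
    Good (gaussStep b m) m := by
  have hbmm : b m m < 0 := h.diag (Nat.lt_succ_self m)
  refine ⟨?_, ?_, ?_⟩
  · intro i j; simp only [gaussStep, h.symm i j]; ring
  · intro i j hi hj hij
    have h1 : 0 ≤ b i j := h.offd i j (by omega) (by omega) hij
    have h2 : 0 ≤ b m i := h.offd m i (by omega) (by omega) (by omega)
    have h3 : 0 ≤ b m j := h.offd m j (by omega) (by omega) (by omega)
    have : b m i * b m j / b m m ≤ 0 :=
      div_nonpos_of_nonneg_of_nonpos (mul_nonneg h2 h3) hbmm.le
    simp only [gaussStep]; linarith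
  · intro x ⟨k, hk, hxk⟩
    rw [gaussStep_quad b h.symm m hbmm.ne x]
    exact h.qnd _ ⟨k, by omega, by simpa [Nat.ne_of_lt hk] using hxk⟩

end NashAux
namespace NashAux
open Finset

variable {n : ℕ}

lemma gaussSeq_n (B : Matrix (Fin n) (Fin n) ℚ) : gaussSeq B n = entries B := by
  unfold gaussSeq; rw [Nat.sub_self]; rfl

lemma gaussSeq_succ (B : Matrix (Fin n) (Fin n) ℚ) {m : ℕ} (hm : m < n) :
    gaussSeq B m = gaussStep (gaussSeq B (m+1)) m := by
  obtain ⟨k, hk1, hk2⟩ : ∃ k, n - m = k + 1 ∧ n - (m+1) = k := ⟨n - (m+1), by omega, rfl⟩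
  unfold gaussSeq
  rw [hk1, hk2]
  have h3 : gaussIter (entries B) n (k+1) = gaussStep (gaussIter (entries B) n k) (n-1-k) := rfl
  have hp : n - 1 - k = m := by omega
  rw [h3, hp]

lemma good_gaussSeq_aux {B : Matrix (Fin n) (Fin n) ℚ} (hB : Good (entries B) n) :
    ∀ d m, m + d = n → Good (gaussSeq B m) m := by
  intro d
  induction d with
  | zero =>
    intro m hm
    have : m = n := by omega
    subst this
    rw [gaussSeq_n]; exact hB
  | succ d ih =>
    intro m hm
    have h1 : m < n := by omega
    rw [gaussSeq_succ B h1]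
    exact good_step (ih (m+1) (by omega))

lemma goodSeq {B : Matrix (Fin n) (Fin n) ℚ} (hB : Good (entries B) n) {m : ℕ}
    (hmn : m ≤ n) : Good (gaussSeq B m) m :=
  good_gaussSeq_aux hB (n - m) m (by omega)

end NashAux
namespace NashAux
open Finset

variable {n : ℕ}

/-- `X` is a strict solution on the block `[0,m)`: `(gX)_k < 0` for `k < m`. -/
def Sol (g : ℕ → ℕ → ℚ) (m : ℕ) (X : ℕ → ℚ) : Prop :=
  ∀ k, k < m → ∑ j ∈ Finset.range m, g k j * X j < 0

lemma sol_down {g : ℕ → ℕ → ℚ} {m : ℕ} (hG : Good g (m+1)) {X : ℕ → ℚ}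
    (hX : Sol g (m+1) X) : Sol (gaussStep g m) m X := by
  intro k hk
  have hbmm : g m m < 0 := hG.diag (by omega)
  rw [step_row_sum g hG.symm m hbmm.ne k X]
  have h1 := hX k (by omega)
  have h2 := hX m (by omega)
  have h3 : 0 ≤ g m k := hG.offd m k (by omega) (by omega) (by omega)
  have h4 : g m k / g m m ≤ 0 := div_nonpos_of_nonneg_of_nonpos h3 hbmm.le
  nlinarith

lemma sol_up {g : ℕ → ℕ → ℚ} {m : ℕ} (hG : Good g (m+1)) (hm1 : 1 ≤ m) {x : ℕ → ℚ}
    (hx : Sol (gaussStep g m) m x) :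
    ∃ x', (∀ k, k < m → x' k = x k) ∧ Sol g (m+1) x' := by
  have hbmm : g m m < 0 := hG.diag (by omega)
  set s : ℚ := ∑ j ∈ Finset.range m, g m j * x j with hs
  set F : ℕ → ℚ := fun k => -(∑ j ∈ Finset.range m, gaussStep g m k j * x j) with hF
  have hFpos : ∀ k ∈ Finset.range m, 0 < F k := by
    intro k hk
    have := hx k (Finset.mem_range.1 hk)
    simp only [hF]; linarith
  set M : ℚ := ∑ k ∈ Finset.range m, g m k with hM
  have hM0 : 0 ≤ M := Finset.sum_nonneg fun k hk =>
    hG.offd m k (by omega) (by have := Finset.mem_range.1 hk; omega)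
      (by have := Finset.mem_range.1 hk; omega)
  have hne : (Finset.range m).Nonempty := ⟨0, Finset.mem_range.2 (by omega)⟩
  set ε : ℚ := (Finset.range m).inf' hne F with hεdef
  have hε : 0 < ε := by
    rw [hεdef, Finset.lt_inf'_iff]
    exact hFpos
  set δ : ℚ := ε / (M + 1) with hδdef
  have hδ : 0 < δ := div_pos hε (by linarith)
  set x' : ℕ → ℚ := fun k => if k = m then s / (-(g m m)) + δ else x k with hx'
  have hx'lt : ∀ k, k < m → x' k = x k := by
    intro k hk; simp only [hx']; rw [if_neg (Nat.ne_of_lt hk)]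
  have hx'm : x' m = s / (-(g m m)) + δ := by simp [hx']
  refine ⟨x', hx'lt, ?_⟩
  intro k hk
  by_cases hkm : k < m
  · -- k < m
    have key : ∑ j ∈ Finset.range (m+1), g k j * x' j
        = (∑ j ∈ Finset.range m, gaussStep g m k j * x j) + g m k * δ := by
      rw [Finset.sum_range_succ]
      have h1 : ∑ j ∈ Finset.range m, g k j * x' j = ∑ j ∈ Finset.range m, g k j * x j :=
        Finset.sum_congr rfl fun j hj => by rw [hx'lt j (Finset.mem_range.1 hj)]
      rw [h1, hx'm]
      have h2 : ∑ j ∈ Finset.range m, gaussStep g m k j * x j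
          = ∑ j ∈ Finset.range m, g k j * x j - (g m k / g m m) * s := by
        have h3 : ∀ j, gaussStep g m k j * x j
            = g k j * x j - (g m k / g m m) * (g m j * x j) := by
          intro j; simp only [gaussStep]; ring
        rw [Finset.sum_congr rfl fun j _ => h3 j, Finset.sum_sub_distrib, ← Finset.mul_sum]
      rw [h2, hG.symm k m]
      field_simp
      ring
    rw [key]
    have hbd1 : ∑ j ∈ Finset.range m, gaussStep g m k j * x j ≤ -ε := by
      have := Finset.inf'_le F (Finset.mem_range.2 hkm)
      simp only [hF] at this
      linarith [this]
    have hgmk : 0 ≤ g m k := hG.offd m k (by omega) (by omega) (by omega)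
    have hgmkM : g m k ≤ M := by
      rw [hM]
      exact Finset.single_le_sum (f := fun j => g m j)
        (fun j hj => hG.offd m j (by omega) (by have := Finset.mem_range.1 hj; omega)
          (by have := Finset.mem_range.1 hj; omega)) (Finset.mem_range.2 hkm)
    have hMδ : M * δ < ε := by
      rw [hδdef, ← mul_div_assoc]
      rw [div_lt_iff₀ (show (0:ℚ) < M + 1 by linarith)]
      nlinarith
    have : g m k * δ ≤ M * δ := mul_le_mul_of_nonneg_right hgmkM hδ.le
    linarith
  · -- k = m
    obtain rfl : k = m := by omega
    rw [Finset.sum_range_succ]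
    have h1 : ∑ j ∈ Finset.range k, g k j * x' j = s :=
      Finset.sum_congr rfl fun j hj => by rw [hx'lt j (Finset.mem_range.1 hj)]
    rw [h1, hx'm]
    have h2 : g k k * (s / -(g k k) + δ) = -s + g k k * δ := by
      field_simp [hbmm.ne]
    rw [h2]
    nlinarith
end NashAux
namespace NashAux
open Finset

variable {n : ℕ} {B : Matrix (Fin n) (Fin n) ℚ}

lemma sol_desc (hB : Good (entries B) n) {X : ℕ → ℚ} (hX : Sol (entries B) n X) :
    ∀ d m, m + d = n → Sol (gaussSeq B m) m X := by
  intro d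
  induction d with
  | zero =>
    intro m hm
    have : m = n := by omega
    subst this
    rw [gaussSeq_n]; exact hX
  | succ d ih =>
    intro m hm
    have h1 : m < n := by omega
    rw [gaussSeq_succ B h1]
    exact sol_down (goodSeq hB (by omega)) (ih (m+1) (by omega))

lemma sol_asc (hB : Good (entries B) n) (hn : 2 ≤ n) {x : ℕ → ℚ}
    (hx : Sol (gaussSeq B 2) 2 x) :
    ∃ X, X 0 = x 0 ∧ X 1 = x 1 ∧ Sol (entries B) n X := by
  have key : ∀ m, 2 ≤ m → m ≤ n → ∃ X, X 0 = x 0 ∧ X 1 = x 1 ∧ Sol (gaussSeq B m) m X := by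
    intro m
    induction m with
    | zero => omega
    | succ m ih =>
      intro h2 hmn
      rcases Nat.lt_or_ge 2 (m+1) with hlt | hle
      · have h2m : 2 ≤ m := by omega
        obtain ⟨X, hX0, hX1, hXs⟩ := ih h2m (by omega)
        have hGm1 : Good (gaussSeq B (m+1)) (m+1) := goodSeq hB (by omega)
        have hstep : Sol (gaussStep (gaussSeq B (m+1)) m) m X := by
          rw [← gaussSeq_succ B (show m < n by omega)]; exact hXs
        obtain ⟨X', hX'eq, hX'sol⟩ := sol_up hGm1 (by omega) hstep
        exact ⟨X', by rw [hX'eq 0 (by omega), hX0], by rw [hX'eq 1 (by omega), hX1], hX'sol⟩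
      · have : m + 1 = 2 := by omega
        rw [this]
        exact ⟨x, rfl, rfl, hx⟩
  obtain ⟨X, h0, h1, hs⟩ := key n (by omega) le_rfl
  exact ⟨X, h0, h1, by rwa [gaussSeq_n] at hs⟩

lemma csum_desc (hB : Good (entries B) n) {m : ℕ} (h1 : 1 ≤ m) (hmn : m < n)
    (h : ∀ i, i < m+1 → CSum B (m+1) i < 0) : ∀ i, i < m → CSum B m i < 0 := by
  intro i hi
  have hG : Good (gaussSeq B (m+1)) (m+1) := goodSeq hB (by omega)
  have hbmm : gaussSeq B (m+1) m m < 0 := hG.diag (by omega)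
  have expand := step_row_sum (gaussSeq B (m+1)) hG.symm m hbmm.ne i (fun _ => 1)
  simp only [mul_one] at expand
  have hCi : ∑ j ∈ Finset.range (m+1), gaussSeq B (m+1) i j < 0 := h i (by omega)
  have hCm : ∑ j ∈ Finset.range (m+1), gaussSeq B (m+1) m j < 0 := h m (by omega)
  have hgmi : 0 ≤ gaussSeq B (m+1) m i := hG.offd m i (by omega) (by omega) (by omega)
  have hq : gaussSeq B (m+1) m i / gaussSeq B (m+1) m m ≤ 0 :=
    div_nonpos_of_nonneg_of_nonpos hgmi hbmm.le
  show (∑ j ∈ Finset.range m, gaussSeq B m i j) < 0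
  rw [gaussSeq_succ B hmn, expand]
  nlinarith
end NashAux
namespace NashAux
open Finset

variable {n : ℕ} {B : Matrix (Fin n) (Fin n) ℚ}

lemma csum_two (hB : Good (entries B) n) :
    ∀ l, 1 ≤ l → l + 1 ≤ n → (∀ i, i < l+1 → CSum B (l+1) i < 0) →
      ∀ i, i < 2 → CSum B 2 i < 0 := by
  intro l
  induction l with
  | zero => omega
  | succ l ih =>
    intro _ hln h
    rcases Nat.eq_zero_or_pos l with rfl | hl
    · exact h
    · exact ih hl (by omega) (csum_desc hB (by omega) (by omega) h)

/-- The 2×2 lemma, existence direction. -/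
lemma two_exists {c : ℕ → ℕ → ℚ} (hc : Good c 2) (hrow : c 0 0 + c 0 1 < 0) :
    ∃ x : ℕ → ℚ, Sol c 2 x ∧ x 0 < x 1 ∧ 0 < x 0 := by
  have h00 : c 0 0 < 0 := hc.diag (by omega)
  have h11 : c 1 1 < 0 := hc.diag (by omega)
  have h01 : 0 ≤ c 0 1 := hc.offd 0 1 (by omega) (by omega) (by omega)
  have h10 : c 1 0 = c 0 1 := hc.symm 1 0
  have hdet : 0 < c 0 0 * c 1 1 - c 0 1 * c 0 1 := by
    have hx : ∃ k, k < 2 ∧ (fun k => if k = 0 then c 0 1 else if k = 1 then -(c 0 0) else 0) k ≠ 0 :=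
      ⟨1, by omega, by simp [h00.ne]⟩
    have := hc.qnd _ hx
    rw [show (2:ℕ) = 1 + 1 from rfl] at this
    simp only [Finset.sum_range_succ, Finset.sum_range_one] at this
    simp only [if_pos rfl, if_neg (by omega : (1:ℕ) ≠ 0)] at this
    norm_num at this
    rw [h10] at this
    nlinarith
  rcases eq_or_lt_of_le h01 with heq | hpos
  · -- c 0 1 = 0
    refine ⟨fun k => if k = 0 then 1 else 2, ?_, by norm_num, by norm_num⟩
    intro k hk
    rw [show (2:ℕ) = 1 + 1 from rfl, Finset.sum_range_succ, Finset.sum_range_one]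
    interval_cases k
    · simp [← heq]; linarith
    · simp [h10, ← heq]; linarith
  · -- c 0 1 > 0
    set u : ℚ := max 1 (c 0 1 / (-(c 1 1))) with hu
    have hub1 : 1 < -(c 0 0) / c 0 1 := by
      rw [lt_div_iff₀ hpos]; linarith
    have hub2 : c 0 1 / (-(c 1 1)) < -(c 0 0) / c 0 1 := by
      rw [div_lt_div_iff₀ (by linarith) hpos]
      nlinarith
    have huu : u < -(c 0 0) / c 0 1 := max_lt hub1 hub2
    set t : ℚ := (u + -(c 0 0) / c 0 1) / 2 with ht
    have hut : u < t := by rw [ht]; linarith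
    have htb : t < -(c 0 0) / c 0 1 := by rw [ht]; linarith
    have h1t : 1 < t := lt_of_le_of_lt (le_max_left _ _) hut
    have h2t : c 0 1 / (-(c 1 1)) < t := lt_of_le_of_lt (le_max_right _ _) hut
    refine ⟨fun k => if k = 0 then 1 else t, ?_, by norm_num; linarith, by norm_num⟩
    intro k hk
    rw [show (2:ℕ) = 1 + 1 from rfl, Finset.sum_range_succ, Finset.sum_range_one]
    interval_cases k
    · have := (lt_div_iff₀ hpos).1 htb
      norm_num
      linarith
    · have := (div_lt_iff₀ (by linarith : (0:ℚ) < -(c 1 1))).1 h2t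
      norm_num [h10]
      linarith

/-- The 2×2 lemma, converse direction. -/
lemma two_rowsum {c : ℕ → ℕ → ℚ} (hc : Good c 2) {x : ℕ → ℚ} (hx : Sol c 2 x)
    (h0 : 0 < x 0) (hlt : x 0 < x 1) : c 0 0 + c 0 1 < 0 := by
  have h00 : c 0 0 < 0 := hc.diag (by omega)
  have h01 : 0 ≤ c 0 1 := hc.offd 0 1 (by omega) (by omega) (by omega)
  by_contra hge
  push_neg at hge
  have hx0 := hx 0 (by omega)
  rw [show (2:ℕ) = 1 + 1 from rfl, Finset.sum_range_succ, Finset.sum_range_one] at hx0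
  nlinarith
end NashAux
namespace NashAux
open Finset

variable {n : ℕ}

lemma entries_lt (B : Matrix (Fin n) (Fin n) ℚ) {i j : ℕ} (hi : i < n) (hj : j < n) :
    entries B i j = B ⟨i, hi⟩ ⟨j, hj⟩ := dif_pos ⟨hi, hj⟩

lemma rat_negdef {B : Matrix (Fin n) (Fin n) ℚ} (hneg : NegDefQ B) :
    ∀ x : Fin n → ℚ, x ≠ 0 → ∑ u, ∑ v, x u * B u v * x v < 0 := by
  intro x hx
  have hx0 : (fun w : Fin n => (x w : ℝ)) ≠ 0 := by
    intro h
    apply hx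
    funext w
    have := congrFun h w
    simp only [Pi.zero_apply] at this ⊢
    exact_mod_cast this
  have h2 := hneg (fun w : Fin n => (x w : ℝ)) hx0
  have h3 : ∑ i : Fin n, ∑ j : Fin n, (x i : ℝ) * (B i j : ℝ) * (x j : ℝ) < 0 := by
    simpa using h2
  exact_mod_cast h3

lemma good_entries {B : Matrix (Fin n) (Fin n) ℚ} (hsym : ∀ i j, B i j = B j i)
    (hoff : ∀ i j, i ≠ j → 0 ≤ B i j) (hneg : NegDefQ B) : Good (entries B) n := by
  refine ⟨?_, ?_, ?_⟩
  · intro i j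
    unfold entries
    by_cases h : i < n ∧ j < n
    · rw [dif_pos h, dif_pos (And.intro h.2 h.1)]
      exact hsym _ _
    · rw [dif_neg h, dif_neg (by tauto)]
  · intro i j hi hj hij
    rw [entries_lt B hi hj]
    exact hoff _ _ (by simp [Fin.ext_iff]; exact hij)
  · intro x hxk
    obtain ⟨k, hk, hxk⟩ := hxk
    have hq : ∑ i ∈ Finset.range n, ∑ j ∈ Finset.range n, x i * entries B i j * x j
        = ∑ u : Fin n, ∑ v : Fin n, (fun w : Fin n => x w.val) u * B u v * (fun w : Fin n => x w.val) v := by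
      rw [← Fin.sum_univ_eq_sum_range (fun i => ∑ j ∈ Finset.range n, x i * entries B i j * x j) n]
      refine Finset.sum_congr rfl fun u _ => ?_
      rw [← Fin.sum_univ_eq_sum_range (fun j => x u.val * entries B u.val j * x j) n]
      refine Finset.sum_congr rfl fun v _ => ?_
      simp [entries, u.isLt, v.isLt]
    rw [hq]
    apply rat_negdef hneg
    intro h
    apply hxk
    have := congrFun h ⟨k, hk⟩
    simpa using this

lemma negdef_submatrix {A : Matrix (Fin n) (Fin n) ℚ} (hneg : NegDefQ A)
    (σ : Equiv.Perm (Fin n)) : NegDefQ (A.submatrix σ σ) := by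
  intro x hx
  have hy : (fun v => x (σ.symm v)) ≠ 0 := by
    intro h
    apply hx
    funext u
    have := congrFun h (σ u)
    simpa using this
  have hval := hneg _ hy
  have hrw : (∑ u, ∑ v, x u * ((A.submatrix σ σ) u v : ℝ) * x v)
      = ∑ s, ∑ t, x (σ.symm s) * (A s t : ℝ) * x (σ.symm t) := by
    apply Fintype.sum_equiv σ
    intro u
    apply Fintype.sum_equiv σ
    intro v
    simp [Matrix.submatrix_apply]
  rw [hrw]
  exact hval

lemma entries_row_sum (B : Matrix (Fin n) (Fin n) ℚ) (X : ℕ → ℚ) (k : Fin n) :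
    ∑ j ∈ Finset.range n, entries B k.val j * X j = ∑ v : Fin n, B k v * X v.val := by
  rw [← Fin.sum_univ_eq_sum_range (fun j => entries B k.val j * X j) n]
  exact Finset.sum_congr rfl fun v _ => by simp [entries, v.isLt, k.isLt]

/-- swap of `0` and `1` on `ℕ` -/
def sw : ℕ → ℕ := fun k => if k = 0 then 1 else if k = 1 then 0 else k

/-- the transposition `(0 1)` in `Perm (Fin n)` -/
def tau (hn : 2 ≤ n) : Equiv.Perm (Fin n) :=
  Equiv.swap ⟨0, by omega⟩ ⟨1, by omega⟩

lemma tau_apply (hn : 2 ≤ n) {i : ℕ} (hi : i < n) (hi' : sw i < n) :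
    tau hn ⟨i, hi⟩ = ⟨sw i, hi'⟩ := by
  unfold tau
  by_cases h0 : i = 0
  · subst h0
    have : (⟨0, hi⟩ : Fin n) = ⟨0, by omega⟩ := rfl
    rw [this, Equiv.swap_apply_left]
    exact Fin.ext (by simp [sw])
  · by_cases h1 : i = 1
    · subst h1
      have : (⟨1, hi⟩ : Fin n) = ⟨1, by omega⟩ := rfl
      rw [this, Equiv.swap_apply_right]
      exact Fin.ext (by simp [sw])
    · rw [Equiv.swap_apply_of_ne_of_ne (by simp [Fin.ext_iff, h0]) (by simp [Fin.ext_iff, h1])]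
      exact Fin.ext (by simp [sw, h0, h1])

lemma sw_lt (k : ℕ) (hn : 2 ≤ n) : k < n ↔ sw k < n := by
  unfold sw; split_ifs <;> omega

lemma entries_tau (B : Matrix (Fin n) (Fin n) ℚ) (hn : 2 ≤ n) (i j : ℕ) :
    entries (B.submatrix (tau hn) (tau hn)) i j = entries B (sw i) (sw j) := by
  unfold entries
  by_cases h : i < n ∧ j < n
  · rw [dif_pos h, dif_pos (And.intro ((sw_lt i hn).1 h.1) ((sw_lt j hn).1 h.2))]
    rw [Matrix.submatrix_apply]
    rw [tau_apply hn h.1 ((sw_lt i hn).1 h.1), tau_apply hn h.2 ((sw_lt j hn).1 h.2)]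
  · rw [dif_neg h, dif_neg (fun hc => h ⟨(sw_lt i hn).2 hc.1, (sw_lt j hn).2 hc.2⟩)]

lemma gaussIter_sw {b b' : ℕ → ℕ → ℚ} (hb : ∀ i j, b' i j = b (sw i) (sw j)) :
    ∀ k, k + 2 ≤ n → ∀ i j, gaussIter b' n k i j = gaussIter b n k (sw i) (sw j) := by
  intro k
  induction k with
  | zero => intro _ i j; exact hb i j
  | succ k ih =>
    intro hk i j
    have hswp : sw (n-1-k) = n-1-k := by unfold sw; split_ifs <;> omega
    show gaussStep (gaussIter b' n k) (n-1-k) i j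
        = gaussStep (gaussIter b n k) (n-1-k) (sw i) (sw j)
    simp only [gaussStep]
    rw [ih (by omega) i j, ih (by omega) (n-1-k) i, ih (by omega) (n-1-k) j,
      ih (by omega) (n-1-k) (n-1-k), hswp]

lemma csum_two_swap (B : Matrix (Fin n) (Fin n) ℚ) (hn : 2 ≤ n) :
    CSum (B.submatrix (tau hn) (tau hn)) 2 0 = CSum B 2 1 := by
  unfold CSum gaussSeq
  rw [Finset.sum_range_succ, Finset.sum_range_one,
    Finset.sum_range_succ, Finset.sum_range_one]
  have h := gaussIter_sw (n := n) (entries_tau B hn) (n - 2) (by omega)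
  rw [h 0 0, h 0 1]
  have s0 : sw 0 = 1 := rfl
  have s1 : sw 1 = 0 := rfl
  rw [s0, s1]
  exact add_comm _ _
end NashAux
namespace NashAux
open Finset

variable {n : ℕ} {A : Matrix (Fin n) (Fin n) ℚ}

lemma sol_nonneg (hoff : ∀ i j, i ≠ j → 0 ≤ A i j) (hneg : NegDefQ A)
    {X : Fin n → ℚ} (hX : ∀ u, ∑ v, A u v * X v ≤ 0) : ∀ u, 0 ≤ X u := by
  by_contra hcon
  push_neg at hcon
  obtain ⟨u0, hu0⟩ := hcon
  set Y : Fin n → ℚ := fun v => max (-(X v)) 0 with hY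
  set P : Fin n → ℚ := fun v => max (X v) 0 with hP
  have hYP : ∀ v, P v = X v + Y v := by
    intro v
    simp only [hY, hP]
    rcases le_total (X v) 0 with h | h
    · rw [max_eq_right h, max_eq_left (by linarith)]; ring
    · rw [max_eq_left h, max_eq_right (by linarith)]; ring
  have hY0 : ∀ v, 0 ≤ Y v := fun v => le_max_right _ _
  have hP0 : ∀ v, 0 ≤ P v := fun v => le_max_right _ _
  have hYPzero : ∀ v, Y v * P v = 0 := by
    intro v
    rcases le_total (X v) 0 with h | h
    · simp only [hY, hP]; rw [max_eq_right h, mul_zero]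
    · simp only [hY, hP]; rw [max_eq_right (by linarith : -(X v) ≤ 0), zero_mul]
  have hYne : Y ≠ 0 := by
    intro h
    have := congrFun h u0
    simp only [hY, Pi.zero_apply] at this
    rw [max_eq_left (by linarith : (0:ℚ) ≤ -(X u0))] at this
    linarith
  have hmain := rat_negdef hneg Y hYne
  have e1 : ∑ u, ∑ v, Y u * A u v * Y v
      = (∑ u, ∑ v, Y u * A u v * P v) - ∑ u, Y u * (∑ v, A u v * X v) := by
    have inner : ∀ u : Fin n, ∑ v, Y u * A u v * Y v
        = (∑ v, Y u * A u v * P v) - Y u * (∑ v, A u v * X v) := by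
      intro u
      rw [Finset.mul_sum, ← Finset.sum_sub_distrib]
      refine Finset.sum_congr rfl fun v _ => ?_
      rw [hYP v]; ring
    rw [Finset.sum_congr rfl (fun u _ => inner u), Finset.sum_sub_distrib]
  have t1 : 0 ≤ ∑ u, ∑ v, Y u * A u v * P v := by
    apply Finset.sum_nonneg; intro u _
    apply Finset.sum_nonneg; intro v _
    by_cases huv : u = v
    · subst huv
      have h5 : Y u * A u u * P u = A u u * (Y u * P u) := by ring
      rw [h5, hYPzero, mul_zero]
    · exact mul_nonneg (mul_nonneg (hY0 u) (hoff u v huv)) (hP0 v)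
  have t2 : ∑ u, Y u * (∑ v, A u v * X v) ≤ 0 := by
    apply Finset.sum_nonpos
    intro u _
    have := mul_le_mul_of_nonneg_left (hX u) (hY0 u)
    rwa [mul_zero] at this
  linarith

lemma sol_pos (hoff : ∀ i j, i ≠ j → 0 ≤ A i j) (hneg : NegDefQ A)
    {X : Fin n → ℚ} (hX : ∀ u, ∑ v, A u v * X v < 0) : ∀ u, 0 < X u := by
  have h0 := sol_nonneg hoff hneg (fun u => (hX u).le)
  intro u
  rcases (h0 u).lt_or_eq with h | h
  · exact h
  · exfalso
    have hsum := hX u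
    rw [← Finset.add_sum_erase _ _ (Finset.mem_univ u), ← h, mul_zero, zero_add] at hsum
    have : 0 ≤ ∑ v ∈ Finset.univ.erase u, A u v * X v := by
      apply Finset.sum_nonneg
      intro v hv
      exact mul_nonneg (hoff u v (Ne.symm (Finset.ne_of_mem_erase hv))) (h0 v)
    linarith

lemma nn_of_rat (hoff : ∀ i j, i ≠ j → 0 ≤ A i j) (hneg : NegDefQ A) (hn : 1 ≤ n)
    {i j : Fin n} (X : Fin n → ℚ) (hX : ∀ u, ∑ v, A u v * X v < 0) (hij : X i < X j) :
    NashNN A i j := by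
  intro C hC
  have hXpos := sol_pos hoff hneg hX
  -- common denominator
  set d : ℕ := ∏ v : Fin n, (X v).den with hd
  have hddvd : ∀ v : Fin n, ((X v).den : ℤ) ∣ (d : ℤ) := by
    intro v
    exact_mod_cast Nat.cast_dvd_cast (Finset.dvd_prod_of_mem (fun v => (X v).den) (Finset.mem_univ v))
  have hdpos : 0 < (d : ℚ) := by
    rw [hd]
    push_cast
    apply Finset.prod_pos
    intro v _
    exact_mod_cast (X v).den_pos
  have hint : ∀ v : Fin n, ∃ z : ℤ, (z : ℚ) = X v * d := by
    intro v
    obtain ⟨c, hc⟩ := hddvd v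
    refine ⟨(X v).num * c, ?_⟩
    have h1 : ((d:ℤ) : ℚ) = ((X v).den : ℚ) * (c : ℚ) := by exact_mod_cast congrArg (fun z : ℤ => (z : ℚ)) hc
    push_cast
    push_cast at h1
    rw [h1, ← mul_assoc, Rat.mul_den_eq_num]
  choose z hz using hint
  -- magnitude
  have hnempty : (Finset.univ : Finset (Fin n)).Nonempty := ⟨⟨0, by omega⟩, Finset.mem_univ _⟩
  set R : ℚ := Finset.univ.sup' hnempty (fun u => C u / (∑ v, A u v * X v)) with hR
  obtain ⟨M, hM⟩ := exists_nat_ge R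
  set N : ℚ := ((M + 1) : ℕ) * d with hN
  have hNpos : 0 < N := by
    rw [hN]; push_cast; positivity
  have hNR : R ≤ N := by
    have h1 : (M : ℚ) ≤ ((M+1:ℕ) : ℚ) := by push_cast; linarith
    have hdpos' : 0 < d := by exact_mod_cast hdpos
    have hd1 : (1:ℚ) ≤ (d:ℚ) := by exact_mod_cast hdpos'
    have h2 : ((M+1:ℕ):ℚ) ≤ ((M+1:ℕ):ℚ) * d := by
      nlinarith [hd1, show (0:ℚ) ≤ ((M+1:ℕ):ℚ) by positivity]
    calc R ≤ (M:ℚ) := hM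
    _ ≤ ((M+1:ℕ):ℚ) := h1
    _ ≤ N := by rw [hN]; exact h2
  refine ⟨fun v => (M + 1 : ℕ) * z v, ?_, ?_, ?_⟩
  · intro k
    have : ((((M+1:ℕ)) * z k : ℤ) : ℚ) = N * X k := by
      push_cast
      rw [hz k, hN]
      push_cast
      ring
    have hpos : (0:ℚ) < N * X k := mul_pos hNpos (hXpos k)
    rw [← this] at hpos
    exact_mod_cast hpos
  · intro k
    have hsum : ∑ t, A k t * (((M+1:ℕ) * z t : ℤ) : ℚ) = N * ∑ v, A k v * X v := by
      rw [Finset.mul_sum]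
      refine Finset.sum_congr rfl fun v _ => ?_
      push_cast
      rw [hz v, hN]
      push_cast
      ring
    rw [hsum]
    have hk : C k / (∑ v, A k v * X v) ≤ R :=
      Finset.le_sup' (fun u => C u / (∑ v, A u v * X v)) (Finset.mem_univ k)
    have hkN : C k / (∑ v, A k v * X v) ≤ N := le_trans hk hNR
    exact (div_le_iff_of_neg (hX k)).1 hkN
  · have h1 : N * X i < N * X j := by
      apply mul_lt_mul_of_pos_left hij hNpos
    have h2 : (((M+1:ℕ) * z i : ℤ):ℚ) < (((M+1:ℕ) * z j : ℤ):ℚ) := by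
      push_cast
      rw [hz i, hz j, hN] at *
      push_cast at h1 ⊢
      linarith
    exact_mod_cast h2

lemma rat_of_nn {i j : Fin n} (h : NashNN A i j) :
    ∃ X : Fin n → ℚ, (∀ u, ∑ v, A u v * X v < 0) ∧ X i < X j ∧ (∀ v, 0 < X v) := by
  obtain ⟨X, hpos, hsol, hlt⟩ := h (fun _ => -1) (fun _ => by norm_num)
  refine ⟨fun v => (X v : ℚ), fun u => lt_of_le_of_lt (hsol u) (by norm_num), ?_, ?_⟩
  · show (X i : ℚ) < (X j : ℚ)
    exact_mod_cast hlt
  · intro v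
    show (0:ℚ) < (X v : ℚ)
    exact_mod_cast hpos v
end NashAux
namespace NashAux
open Finset

variable {n : ℕ}

lemma entries_row_sum' (B : Matrix (Fin n) (Fin n) ℚ) (X : ℕ → ℚ) {k : ℕ} (hk : k < n) :
    ∑ j ∈ Finset.range n, entries B k j * X j = ∑ v : Fin n, B ⟨k, hk⟩ v * X v.val :=
  entries_row_sum B X ⟨k, hk⟩

section Main

variable {A : Matrix (Fin n) (Fin n) ℚ} (hn : 2 ≤ n)
  (hsym : ∀ i j, A i j = A j i) (hdiag : ∀ i, A i i < 0)
  (hoff : ∀ i j, i ≠ j → 0 ≤ A i j) (hneg : NegDefQ A)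

include hsym hoff hneg

lemma goodA (σ : Equiv.Perm (Fin n)) : Good (entries (A.submatrix σ σ)) n :=
  good_entries (fun i j => hsym _ _) (fun i j hij => hoff _ _ (fun e => hij (σ.injective e)))
    (negdef_submatrix hneg σ)

include hn

lemma key0 (hNN : NashNNAll A) (σ : Equiv.Perm (Fin n)) :
    CSum (A.submatrix σ σ) 2 0 < 0 := by
  set B := A.submatrix σ σ with hB
  have hGood : Good (entries B) n := goodA hsym hoff hneg σ
  set z0 : Fin n := ⟨0, by omega⟩ with hz0
  set z1 : Fin n := ⟨1, by omega⟩ with hz1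
  have hij : σ z0 ≠ σ z1 := by
    intro e
    have := σ.injective e
    rw [hz0, hz1] at this
    simp [Fin.ext_iff] at this
  obtain ⟨Xh, hXsol, hXlt, hXpos⟩ := rat_of_nn (hNN _ _ hij)
  set Xn : ℕ → ℚ := fun k => if h : k < n then Xh (σ ⟨k, h⟩) else 0 with hXn
  have hXnval : ∀ v : Fin n, Xn v.val = Xh (σ v) := by
    intro v
    rw [hXn]
    simp only [v.isLt, dif_pos]
  have hXnsol : Sol (entries B) n Xn := by
    intro k hk
    rw [entries_row_sum' B Xn hk]
    have h1 : ∀ v : Fin n, B ⟨k, hk⟩ v * Xn v.val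
        = A (σ ⟨k, hk⟩) (σ v) * Xh (σ v) := by
      intro v
      rw [hXnval v]
      rfl
    rw [Finset.sum_congr rfl fun v _ => h1 v]
    have h2 : ∑ v : Fin n, A (σ ⟨k, hk⟩) (σ v) * Xh (σ v)
        = ∑ t : Fin n, A (σ ⟨k, hk⟩) t * Xh t := by
      apply Fintype.sum_equiv σ
      intro v
      rfl
    rw [h2]
    exact hXsol _
  have hdesc : Sol (gaussSeq B 2) 2 Xn := sol_desc hGood hXnsol (n-2) 2 (by omega)
  have hG2 : Good (gaussSeq B 2) 2 := goodSeq hGood (by omega)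
  have e0 : Xn 0 = Xh (σ z0) := hXnval z0
  have e1 : Xn 1 = Xh (σ z1) := hXnval z1
  have hp : 0 < Xn 0 := by rw [e0]; exact hXpos _
  have hl : Xn 0 < Xn 1 := by rw [e0, e1]; exact hXlt
  have := two_rowsum hG2 hdesc hp hl
  show CSum B 2 0 < 0
  unfold CSum
  rw [Finset.sum_range_succ, Finset.sum_range_one]
  exact this

lemma key1 (hNN : NashNNAll A) (σ : Equiv.Perm (Fin n)) :
    CSum (A.submatrix σ σ) 2 1 < 0 := by
  have h := key0 hn hsym hoff hneg hNN ((tau hn).trans σ)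
  have e : A.submatrix (((tau hn).trans σ)) (((tau hn).trans σ))
      = (A.submatrix σ σ).submatrix (tau hn) (tau hn) := by
    rw [Matrix.submatrix_submatrix]
    rfl
  rw [e, csum_two_swap _ hn] at h
  exact h

omit hsym hoff hneg in
lemma mkperm {i j : Fin n} (hij : i ≠ j) :
    ∃ σ : Equiv.Perm (Fin n), σ ⟨0, by omega⟩ = i ∧ σ ⟨1, by omega⟩ = j := by
  set z0 : Fin n := ⟨0, by omega⟩
  set z1 : Fin n := ⟨1, by omega⟩
  have hz01 : z0 ≠ z1 := by simp [Fin.ext_iff]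
  set t1 : Equiv.Perm (Fin n) := Equiv.swap z0 i with ht1
  set j' : Fin n := t1 j with hj'
  have hj'0 : j' ≠ z0 := by
    rw [hj', ht1]
    intro e
    have : j = t1 z0 := by
      rw [← e, ht1]
      simp [Equiv.swap_apply_self]
    rw [ht1, Equiv.swap_apply_left] at this
    exact hij.symm this
  refine ⟨(Equiv.swap z1 j').trans t1, ?_, ?_⟩
  · show t1 (Equiv.swap z1 j' z0) = i
    rw [Equiv.swap_apply_of_ne_of_ne hz01 (Ne.symm hj'0)]
    rw [ht1, Equiv.swap_apply_left]
  · show t1 (Equiv.swap z1 j' z1) = j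
    rw [Equiv.swap_apply_left, hj', ht1, Equiv.swap_apply_self]

end Main
end NashAux
open NashAux Finset in
set_option maxHeartbeats 1000000 in
lemma NashAux.backward {n : ℕ} {A : Matrix (Fin n) (Fin n) ℚ} (hn : 2 ≤ n)
    (hsym : ∀ i j, A i j = A j i)
    (hoff : ∀ i j, i ≠ j → 0 ≤ A i j) (hneg : NegDefQ A) {i j : Fin n} (hij : i ≠ j) (σ : Equiv.Perm (Fin n))
    (hσ0 : σ ⟨0, by omega⟩ = i) (hσ1 : σ ⟨1, by omega⟩ = j)
    (hc : CSum (A.submatrix σ σ) 2 0 < 0) : NashNN A i j := by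
  set B := A.submatrix σ σ with hB
  have hGood : Good (entries B) n := goodA hsym hoff hneg σ
  have hG2 : Good (gaussSeq B 2) 2 := goodSeq hGood (by omega)
  have hc' : gaussSeq B 2 0 0 + gaussSeq B 2 0 1 < 0 := by
    unfold CSum at hc
    rwa [Finset.sum_range_succ, Finset.sum_range_one] at hc
  obtain ⟨x, hxsol, hxlt, hxpos⟩ := two_exists hG2 hc'
  obtain ⟨X, hX0, hX1, hXsol⟩ := sol_asc hGood hn hxsol
  set Xh : Fin n → ℚ := fun v => X ((σ.symm v).val) with hXh
  have hXhσ : ∀ v : Fin n, Xh (σ v) = X v.val := by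
    intro v
    rw [hXh]
    simp
  have hsolA : ∀ u, ∑ t, A u t * Xh t < 0 := by
    intro u
    have hw : u = σ (σ.symm u) := (σ.apply_symm_apply u).symm
    set w : Fin n := σ.symm u with hwdef
    have hs := hXsol w.val (w.isLt)
    rw [entries_row_sum' B X w.isLt] at hs
    have h1 : ∀ v : Fin n, B ⟨w.val, w.isLt⟩ v * X v.val = A (σ w) (σ v) * Xh (σ v) := by
      intro v
      rw [hXhσ v]
      rfl
    rw [Finset.sum_congr rfl fun v _ => h1 v] at hs
    have h2 : ∑ v : Fin n, A (σ w) (σ v) * Xh (σ v) = ∑ t : Fin n, A (σ w) t * Xh t := by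
      apply Fintype.sum_equiv σ
      intro v
      rfl
    rw [h2] at hs
    rw [hw]
    exact hs
  have hordlt : Xh i < Xh j := by
    have hi : σ.symm i = ⟨0, by omega⟩ := by rw [← hσ0, Equiv.symm_apply_apply]
    have hj : σ.symm j = ⟨1, by omega⟩ := by rw [← hσ1, Equiv.symm_apply_apply]
    rw [hXh]
    simp only [hi, hj]
    rw [hX0, hX1]
    exact hxlt
  exact nn_of_rat hoff hneg (by omega) Xh hsolA hordlt

theorem nash_matrix_characterization (n : ℕ) (hn : 2 ≤ n) (A : Matrix (Fin n) (Fin n) ℚ)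
    (hsym : ∀ i j, A i j = A j i) (hdiag : ∀ i, A i i < 0)
    (hoff : ∀ i j, i ≠ j → 0 ≤ A i j) (hneg : NegDefQ A) :
    NashNNAll A ↔
      ∃ l : ℕ, 1 ≤ l ∧ l ≤ n - 1 ∧
        ∀ σ : Equiv.Perm (Fin n), ∀ i : ℕ, i < l + 1 →
          CSum (A.submatrix σ σ) (l + 1) i < 0 := by
  constructor
  · intro hNN
    refine ⟨1, le_rfl, by omega, ?_⟩
    intro σ i hi
    interval_cases i
    · exact NashAux.key0 hn hsym hoff hneg hNN σ
    · exact NashAux.key1 hn hsym hoff hneg hNN σ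
  · rintro ⟨l, hl1, hln, H⟩
    intro i j hij
    obtain ⟨σ, hσ0, hσ1⟩ := NashAux.mkperm hn hij
    have hgood : NashAux.Good (entries (A.submatrix σ σ)) n :=
      NashAux.goodA hsym hoff hneg σ
    have h2 := NashAux.csum_two hgood l hl1 (by omega) (fun i' hi' => H σ i' hi')
    exact NashAux.backward hn hsym hoff hneg hij σ hσ0 hσ1 (h2 0 (by omega))
end

section
/- If Σ_{j=1}^{n} a_{i,j} < 0 for every i = 1, …, n, then A satisfies (NN). -/
theorem row_sums_neg_implies_NN (n : ℕ) (hn : 2 ≤ n) (A : Matrix (Fin n) (Fin n) ℚ)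
    (hsym : ∀ i j, A i j = A j i) (hdiag : ∀ i, A i i < 0)
    (hoff : ∀ i j, i ≠ j → 0 ≤ A i j) (hneg : NegDefQ A)
    (hrow : ∀ i, ∑ j, A i j < 0) :
    NashNNAll A := by
  intro i j hij C hC
  haveI : NeZero n := ⟨by omega⟩
  have hne : (Finset.univ : Finset (Fin n)).Nonempty := Finset.univ_nonempty
  set N : ℤ := max 1 (Finset.univ.sup' hne fun k : Fin n => ⌈(A k j - C k) / (-(∑ t, A k t))⌉)
    with hN
  have hN1 : 1 ≤ N := le_max_left _ _
  refine ⟨fun t => N + (if t = j then 1 else 0), ?_, ?_, ?_⟩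
  · intro k
    have : (0:ℤ) ≤ (if k = j then 1 else 0) := by split <;> omega
    simp only []
    omega
  · intro k
    have hS : (∑ t, A k t) < 0 := hrow k
    have hkey : (A k j - C k) / (-(∑ t, A k t)) ≤ (N : ℚ) := by
      have h1 : (⌈(A k j - C k) / (-(∑ t, A k t))⌉ : ℤ) ≤ N := by
        rw [hN]
        exact le_max_of_le_right (Finset.le_sup' (fun k : Fin n => ⌈(A k j - C k) / (-(∑ t, A k t))⌉) (Finset.mem_univ k))
      calc (A k j - C k) / (-(∑ t, A k t)) ≤ (⌈(A k j - C k) / (-(∑ t, A k t))⌉ : ℚ) :=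
            Int.le_ceil _
        _ ≤ (N : ℚ) := by exact_mod_cast h1
    have hpos : (0:ℚ) < -(∑ t, A k t) := by linarith
    have hmul : A k j - C k ≤ (N : ℚ) * (-(∑ t, A k t)) := by
      rw [div_le_iff₀ hpos] at hkey
      linarith
    have hsum : ∑ t, A k t * ((N : ℚ) + (if t = j then 1 else 0))
        = (N : ℚ) * (∑ t, A k t) + A k j := by
      rw [Finset.sum_congr rfl (fun t _ => by ring_nf : ∀ t ∈ Finset.univ,
        A k t * ((N : ℚ) + (if t = j then 1 else 0))
          = A k t * (N : ℚ) + A k t * (if t = j then 1 else 0))]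
      rw [Finset.sum_add_distrib, Finset.mul_sum]
      congr 1
      · exact Finset.sum_congr rfl fun t _ => mul_comm _ _
      · simp
    have : ∑ t, A k t * (((N + (if t = j then 1 else 0) : ℤ)) : ℚ)
        = (N : ℚ) * (∑ t, A k t) + A k j := by
      rw [← hsum]
      apply Finset.sum_congr rfl
      intro t _
      congr 1
      push_cast
      split <;> simp
    rw [this]
    linarith
  · simp [hij]
end

section
/- Assume the dual graph Γ of A is connected. If A satisfies (NN), then C(A)_i < 0 for every leaf i of Γ. -/
/-- The dual graph of `A`: edge between distinct `i, j` iff `A i j > 0`. -/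
def dualGraph {V : Type*} (A : Matrix V V ℚ) : SimpleGraph V :=
  SimpleGraph.fromRel fun i j => 0 < A i j

/-- A leaf of a graph: a vertex adjacent to exactly one other vertex. -/
def IsLeaf {V : Type*} (G : SimpleGraph V) (i : V) : Prop :=
  ∃! j, G.Adj i j

theorem NN_implies_leaf_sum_neg (n : ℕ) (hn : 2 ≤ n) (A : Matrix (Fin n) (Fin n) ℚ)
    (hsym : ∀ i j, A i j = A j i) (hdiag : ∀ i, A i i < 0)
    (hoff : ∀ i j, i ≠ j → 0 ≤ A i j) (hneg : NegDefQ A)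
    (hconn : (dualGraph A).Connected) :
    NashNNAll A → ∀ i : Fin n, IsLeaf (dualGraph A) i → ∑ j, A i j < 0 := by

  intro hNN i hleaf
  obtain ⟨j, hadj, huniq⟩ := hleaf
  have hij : i ≠ j := (dualGraph A).ne_of_adj hadj
  have hAij : 0 < A i j := by
    rcases hadj.2 with h | h
    · exact h
    · rw [hsym]; exact h
  have hzero : ∀ k, k ≠ i → k ≠ j → A i k = 0 := by
    intro k hki hkj
    by_contra hne
    have hpos : 0 < A i k := lt_of_le_of_ne (hoff i k (Ne.symm hki)) (Ne.symm hne)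
    have : (dualGraph A).Adj i k := ⟨Ne.symm hki, Or.inl hpos⟩
    exact hkj (huniq k this)
  have hsum : ∀ f : Fin n → ℚ, ∑ t, A i t * f t = A i i * f i + A i j * f j := by
    intro f
    rw [← Finset.sum_subset (Finset.subset_univ ({i, j} : Finset (Fin n)))
      (fun k _ hk => by
        simp only [Finset.mem_insert, Finset.mem_singleton, not_or] at hk
        rw [hzero k hk.1 hk.2, zero_mul])]
    rw [Finset.sum_pair hij]
  obtain ⟨X, hXpos, hAX, hXij⟩ := hNN i j hij (fun _ => 0) (fun _ => le_refl 0)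
  have h0 : A i i * (X i : ℚ) + A i j * (X j : ℚ) ≤ 0 := by
    have := hAX i
    rwa [hsum (fun t => (X t : ℚ))] at this
  have hXi1 : (1 : ℚ) ≤ (X i : ℚ) := by exact_mod_cast hXpos i
  have hXji : (X i : ℚ) + 1 ≤ (X j : ℚ) := by exact_mod_cast hXij
  have key : A i i + A i j < 0 := by nlinarith
  have h1 : ∑ t, A i t * 1 = A i i * 1 + A i j * 1 := hsum (fun _ => 1)
  simp only [mul_one] at h1
  rw [h1]; exact key
end

section
/- Assume the dual graph Γ of A is a tree (connected and without cycles) and that C(A)_i ≤ 0 for every vertex i. Then C(A)_i < 0 for every leaf i of Γ if and only if A satisfies (NN). -/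
/-!
Necessity: if a leaf `i` with unique neighbour `j` had zero row sum, its row would read
`a_{i,i} (X_i - X_j) ≤ C_i`, so `NN_{(i,j)}` fails for `C = 0`.

Sufficiency: `A` is an M-matrix up to sign, so `A w ≤ 0` forces `w ≥ 0`. Solve `A Y = -𝟙` and
`A w = -e_j`; then `Y > 0`, and `w` attains its maximum only at `j`: at a maximum `k ≠ j` the row
`k` forces zero row sum and the maximum at every neighbour, so the set of maxima other than `j`
is closed under neighbours away from `j` and, `Γ` being a tree, contains a leaf — whose row sum
is negative. Then `Y + λ w` for large `λ` is a rational solution of `A X ≤ -𝟙` with `X_i < X_j`,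
and clearing denominators and scaling gives the integer vectors required by `(NN)`.
-/

open Matrix SimpleGraph

namespace SimpleGraph

variable {V : Type*} {G : SimpleGraph V}

lemma IsTree.eq_of_adj_of_dist_add_one (hG : G.IsTree) (u : V) {k l₁ l₂ : V}
    (h₁ : G.Adj k l₁) (h₂ : G.Adj k l₂) (hd₁ : G.dist u l₁ + 1 = G.dist u k)
    (hd₂ : G.dist u l₂ + 1 = G.dist u k) : l₁ = l₂ := by
  classical
  obtain ⟨P, hP, -⟩ := hG.connected.exists_path_of_dist u k
  have eq_penultimate : ∀ l, G.Adj k l → G.dist u l + 1 = G.dist u k → l = P.penultimate := by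
    intro l hkl hd
    obtain ⟨Q, hQ, hQlen⟩ := hG.connected.exists_path_of_dist u l
    have hk : k ∉ Q.support := fun hk => by
      have := dist_le (Q.takeUntil k hk)
      have := Q.length_takeUntil_le_length hk
      omega
    exact hG.isAcyclic.eq_penultimate_of_adj_end hP hkl
      (hG.isAcyclic.mem_support_of_ne_mem_support_of_adj_of_isPath hP hQ hkl hk)
  rw [eq_penultimate l₁ h₁ hd₁, eq_penultimate l₂ h₂ hd₂]

/-- A vertex of `S` farthest from `j` has all its neighbours closer to `j`, hence only one. -/
lemma IsTree.exists_isLeaf_mem [Finite V] (hG : G.IsTree) {S : Set V} {j : V}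
    (hS : S.Nonempty) (hj : j ∉ S) (hclosed : ∀ k ∈ S, ∀ l, G.Adj k l → l ∈ S ∨ l = j) :
    ∃ k ∈ S, IsLeaf G k := by
  obtain ⟨k, hkS, hmax⟩ := S.exists_max_image (G.dist j) S.toFinite hS
  have hkj : k ≠ j := fun h => hj (h ▸ hkS)
  have hparent : ∀ l, G.Adj k l → G.dist j l + 1 = G.dist j k := by
    intro l hkl
    have hle : G.dist j l ≤ G.dist j k := by
      rcases hclosed k hkS l hkl with hlS | rfl
      · exact hmax l hlS
      · simp
    have := hG.dist_eq_dist_add_one_of_adj j hkl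
    omega
  obtain ⟨p⟩ := hG.connected.preconnected k j
  have hp := p.adj_snd (Walk.not_nil_of_ne hkj)
  exact ⟨k, hkS, p.snd, hp, fun l hkl =>
    hG.eq_of_adj_of_dist_add_one j hkl hp (hparent l hkl) (hparent _ hp)⟩

end SimpleGraph

variable {V : Type*} [Fintype V] {A : Matrix V V ℚ}

lemma NegDefQ.dotProduct_mulVec_neg (hA : NegDefQ A) {v : V → ℚ} (hv : v ≠ 0) :
    v ⬝ᵥ (A *ᵥ v) < 0 := by
  have hv' : (fun i => (v i : ℝ)) ≠ 0 := fun h =>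
    hv (funext fun i => by simpa using congrFun h i)
  have hexpand : v ⬝ᵥ (A *ᵥ v) = ∑ i, ∑ j, v i * A i j * v j := by
    simp only [dotProduct, mulVec, Finset.mul_sum, mul_assoc]
  rw [hexpand]
  exact_mod_cast hA _ hv'

lemma NegDefQ.mulVec_injective (hA : NegDefQ A) : Function.Injective A.mulVec := by
  intro v w h
  by_contra hne
  have := hA.dotProduct_mulVec_neg (sub_ne_zero.mpr hne)
  rw [mulVec_sub, h, sub_self, dotProduct_zero] at this
  exact this.false

lemma NegDefQ.exists_mulVec_eq [DecidableEq V] (hA : NegDefQ A) (b : V → ℚ) :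
    ∃ w, A *ᵥ w = b :=
  mulVec_surjective_iff_isUnit.mpr (mulVec_injective_iff_isUnit.mp hA.mulVec_injective) b

/-- Inverse positivity: `-A⁻¹` has nonnegative entries. -/
lemma NegDefQ.nonneg_of_mulVec_nonpos (hA : NegDefQ A) (hoff : ∀ i j, i ≠ j → 0 ≤ A i j)
    {w : V → ℚ} (hw : ∀ k, (A *ᵥ w) k ≤ 0) (k : V) : 0 ≤ w k := by
  set p : V → ℚ := fun k => (w k)⁺
  set m : V → ℚ := fun k => (w k)⁻
  have hwpm : w = p - m := funext fun k => (posPart_sub_negPart (w k)).symm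
  have hmw : m ⬝ᵥ (A *ᵥ w) ≤ 0 :=
    Finset.sum_nonpos fun k _ => mul_nonpos_of_nonneg_of_nonpos (negPart_nonneg _) (hw k)
  -- the diagonal terms vanish since `m k * p k = 0`, the others are nonnegative
  have hmp : 0 ≤ m ⬝ᵥ (A *ᵥ p) := by
    simp only [dotProduct, mulVec, Finset.mul_sum]
    refine Finset.sum_nonneg fun k _ => Finset.sum_nonneg fun t _ => ?_
    rcases eq_or_ne k t with rfl | hkt
    · rcases le_total (w k) 0 with hk | hk
      · simp [p, posPart_eq_zero.mpr hk]
      · simp [m, negPart_eq_zero.mpr hk]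
    · exact mul_nonneg (negPart_nonneg _) (mul_nonneg (hoff k t hkt) (posPart_nonneg _))
  have hm : m = 0 := by
    by_contra hm
    have := hA.dotProduct_mulVec_neg hm
    rw [hwpm, mulVec_sub, dotProduct_sub] at hmw
    linarith
  have := congrFun hwpm k
  simp only [hm, sub_zero, p] at this
  exact this ▸ posPart_nonneg _

lemma pos_of_mulVec_neg (hoff : ∀ i j, i ≠ j → 0 ≤ A i j) {w : V → ℚ}
    (hw : ∀ t, 0 ≤ w t) {k : V} (hk : (A *ᵥ w) k < 0) : 0 < w k := by
  refine (hw k).lt_of_ne fun hk0 => hk.not_ge <| Finset.sum_nonneg fun t _ => ?_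
  rcases eq_or_ne k t with rfl | hkt
  · simp [← hk0]
  · exact mul_nonneg (hoff k t hkt) (hw t)

lemma rowSum_eq_zero_and_eq_of_isMax (hoff : ∀ i j, i ≠ j → 0 ≤ A i j) {w : V → ℚ} {M : ℚ}
    (hMpos : 0 < M) (hM : ∀ t, w t ≤ M) {k : V} (hk : w k = M) (hrow : (A *ᵥ w) k = 0)
    (hC : ∑ t, A k t ≤ 0) : ∑ t, A k t = 0 ∧ ∀ l, 0 < A k l → w l = M := by
  have hterm : ∀ t ∈ Finset.univ, 0 ≤ A k t * (M - w t) := by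
    intro t _
    rcases eq_or_ne k t with rfl | hkt
    · simp [hk]
    · exact mul_nonneg (hoff k t hkt) (sub_nonneg.mpr (hM t))
  have hsum : ∑ t, A k t * (M - w t) = M * ∑ t, A k t := by
    have : ∑ t, A k t * (M - w t) = M * ∑ t, A k t - (A *ᵥ w) k := by
      rw [mulVec, dotProduct, Finset.mul_sum, ← Finset.sum_sub_distrib]
      exact Finset.sum_congr rfl fun t _ => by ring
    rw [this, hrow, sub_zero]
  have hzero : ∑ t, A k t * (M - w t) = 0 :=
    le_antisymm (hsum ▸ mul_nonpos_of_nonneg_of_nonpos hMpos.le hC) (Finset.sum_nonneg hterm)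
  refine ⟨(mul_eq_zero.mp (hsum ▸ hzero)).resolve_left hMpos.ne', fun l hl => ?_⟩
  have := (Finset.sum_eq_zero_iff_of_nonneg hterm).mp hzero l (Finset.mem_univ l)
  linarith [(mul_eq_zero.mp this).resolve_left hl.ne']

section Tree

variable (hsym : ∀ i j, A i j = A j i) (hoff : ∀ i j, i ≠ j → 0 ≤ A i j) (hA : NegDefQ A)
  (htree : (dualGraph A).IsTree) (hC : ∀ i, ∑ j, A i j ≤ 0)
  (hleaf : ∀ i, IsLeaf (dualGraph A) i → ∑ j, A i j < 0)
include hsym hoff hA htree hC hleaf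

lemma lt_of_mulVec_eq_neg_single [DecidableEq V] {j : V} {w : V → ℚ}
    (hw : A *ᵥ w = -Pi.single j 1) {i : V} (hij : i ≠ j) : w i < w j := by
  have hw0 : ∀ t, 0 ≤ w t := hA.nonneg_of_mulVec_nonpos hoff fun k => by
    rw [hw, Pi.neg_apply, Pi.single_apply]
    split_ifs <;> norm_num
  have hrow : ∀ k, k ≠ j → (A *ᵥ w) k = 0 := fun k hkj => by
    rw [hw, Pi.neg_apply, Pi.single_eq_of_ne hkj, neg_zero]
  have hwj : 0 < w j := pos_of_mulVec_neg hoff hw0 (by simp [hw])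
  by_contra! hji
  obtain ⟨m, -, hm⟩ := Finset.univ.exists_max_image w ⟨j, Finset.mem_univ j⟩
  have hM : ∀ t, w t ≤ w m := fun t => hm t (Finset.mem_univ t)
  set S : Set V := {k | k ≠ j ∧ w k = w m}
  have hS : S.Nonempty := by
    by_cases hmj : m = j
    · exact ⟨i, hij, le_antisymm (hM i) (hmj ▸ hji)⟩
    · exact ⟨m, hmj, rfl⟩
  have hmax : ∀ k ∈ S, ∑ t, A k t = 0 ∧ ∀ l, 0 < A k l → w l = w m := fun k hk =>
    rowSum_eq_zero_and_eq_of_isMax hoff (hwj.trans_le (hM j)) hM hk.2 (hrow k hk.1) (hC k)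
  have hclosed : ∀ k ∈ S, ∀ l, (dualGraph A).Adj k l → l ∈ S ∨ l = j := by
    rintro k hk l ⟨-, hkl⟩
    have hwl := (hmax k hk).2 l (hkl.elim id fun hlk => hsym k l ▸ hlk)
    by_cases hlj : l = j
    · exact Or.inr hlj
    · exact Or.inl ⟨hlj, hwl⟩
  obtain ⟨k, hkS, hk⟩ := htree.exists_isLeaf_mem hS (fun h => h.1 rfl) hclosed
  exact (hleaf k hk).ne (hmax k hkS).1

/-- The witness is `Y + λ w` with `A Y = -𝟙` and `A w = -e_j`. -/
lemma exists_pos_mulVec_le_neg_one_lt [DecidableEq V] {i j : V} (hij : i ≠ j) :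
    ∃ X : V → ℚ, (∀ k, 0 < X k) ∧ (∀ k, (A *ᵥ X) k ≤ -1) ∧ X i < X j := by
  obtain ⟨Y, hY⟩ := hA.exists_mulVec_eq (fun _ => -1)
  obtain ⟨w, hw⟩ := hA.exists_mulVec_eq (-Pi.single j 1)
  have hY0 := hA.nonneg_of_mulVec_nonpos hoff fun k => by rw [hY]; norm_num
  have hYpos : ∀ k, 0 < Y k := fun k => pos_of_mulVec_neg hoff hY0 (by rw [hY]; norm_num)
  have hAw : ∀ k, (A *ᵥ w) k ≤ 0 := fun k => by
    rw [hw, Pi.neg_apply, Pi.single_apply]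
    split_ifs <;> norm_num
  have hw0 := hA.nonneg_of_mulVec_nonpos hoff hAw
  have hwij := lt_of_mulVec_eq_neg_single hsym hoff hA htree hC hleaf hw hij
  set c := Y i / (w j - w i)
  have hc : c * (w j - w i) = Y i := div_mul_cancel₀ _ (sub_pos.mpr hwij).ne'
  have hc0 : 0 ≤ c := div_nonneg (hY0 i) (sub_pos.mpr hwij).le
  refine ⟨Y + c • w, fun k => ?_, fun k => ?_, ?_⟩
  · simpa using add_pos_of_pos_of_nonneg (hYpos k) (mul_nonneg hc0 (hw0 k))
  · have := mul_nonpos_of_nonneg_of_nonpos hc0 (hAw k)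
    simpa [mulVec_add, mulVec_smul, hY] using this
  · simp only [Pi.add_apply, Pi.smul_apply, smul_eq_mul]
    linarith [hYpos j]

end Tree

lemma exists_nat_mul_eq_intCast_s9 (X : V → ℚ) :
    ∃ D : ℕ, 0 < D ∧ ∃ Z : V → ℤ, ∀ k, (Z k : ℚ) = D * X k := by
  set D := ∏ k, (X k).den
  refine ⟨D, Finset.prod_pos fun k _ => (X k).den_pos, fun k => (D / (X k).den : ℕ) * (X k).num,
    fun k => ?_⟩
  have hdvd : (X k).den ∣ D := Finset.dvd_prod_of_mem _ (Finset.mem_univ k)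
  rw [Int.cast_mul, Int.cast_natCast, Nat.cast_div hdvd (by positivity), div_mul_eq_mul_div,
    mul_div_assoc, Rat.num_div_den]

lemma nashNN_of_rat {i j : V} (X : V → ℚ) (hpos : ∀ k, 0 < X k) (hrow : ∀ k, (A *ᵥ X) k ≤ -1)
    (hlt : X i < X j) : NashNN A i j := by
  intro C hC
  obtain ⟨D, hD, Z, hZ⟩ := exists_nat_mul_eq_intCast_s9 X
  obtain ⟨N, hN⟩ := exists_nat_ge (∑ k, -C k)
  have hCN : ∀ k, -C k ≤ N := fun k =>
    (Finset.single_le_sum (fun t _ => neg_nonneg.mpr (hC t)) (Finset.mem_univ k)).trans hN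
  have hscale : ∀ k, (((N + 1 : ℤ) * Z k : ℤ) : ℚ) = ((N + 1) * D : ℚ) * X k := fun k => by
    push_cast
    rw [hZ, mul_assoc]
  have hND : (N + 1 : ℚ) ≤ (N + 1) * D := by
    have : (1 : ℚ) ≤ D := by exact_mod_cast hD
    nlinarith
  refine ⟨fun k => (N + 1) * Z k, fun k => ?_, fun k => ?_, ?_⟩
  · have : (0 : ℚ) < ((N + 1) * Z k : ℤ) := by
      rw [hscale]
      exact mul_pos (by linarith) (hpos k)
    exact_mod_cast this
  · have hrowk : ∑ t, A k t * ((N + 1) * D * X t) = (N + 1) * D * (A *ᵥ X) k := by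
      rw [mulVec, dotProduct, Finset.mul_sum]
      exact Finset.sum_congr rfl fun t _ => by ring
    simp only [hscale, hrowk]
    nlinarith [mul_le_mul_of_nonneg_left (hrow k) (by positivity : (0 : ℚ) ≤ (N + 1) * D), hCN k]
  · have : ((N + 1) * D : ℚ) * X i < ((N + 1) * D : ℚ) * X j :=
      mul_lt_mul_of_pos_left hlt (by linarith)
    rw [← hscale, ← hscale] at this
    exact_mod_cast this

lemma rowSum_neg_of_isLeaf (hdiag : ∀ i, A i i < 0) (hoff : ∀ i j, i ≠ j → 0 ≤ A i j)
    (hNN : NashNNAll A) {i : V} (hi : IsLeaf (dualGraph A) i) : ∑ t, A i t < 0 := by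
  obtain ⟨j, ⟨hij, -⟩, huniq⟩ := hi
  have hzero : ∀ t, t ≠ i ∧ t ≠ j → A i t = 0 := fun t ⟨hti, htj⟩ =>
    le_antisymm (not_lt.mp fun h => htj (huniq t ⟨hti.symm, Or.inl h⟩)) (hoff i t hti.symm)
  obtain ⟨X, hXpos, hXrow, hXij⟩ := hNN i j hij 0 fun _ => le_rfl
  have hrow : ∑ t, A i t * (X t : ℚ) ≤ 0 := hXrow i
  rw [Fintype.sum_eq_add i j hij fun t ht => by rw [hzero t ht, zero_mul]] at hrow
  rw [Fintype.sum_eq_add i j hij hzero]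
  have hXi : (0 : ℚ) < X i := by exact_mod_cast hXpos i
  have hXij' : (X i : ℚ) < X j := by exact_mod_cast hXij
  -- with `a_{i,i} + a_{i,j} ≥ 0`, row `i` would give `a_{i,i} X_i + a_{i,j} X_j > 0`
  by_contra! hsum
  have hAij : 0 < A i j := by linarith [hdiag i]
  nlinarith [mul_lt_mul_of_pos_left hXij' hAij, mul_nonneg hsum hXi.le]

theorem tree_NN_iff_leaves_general (n : ℕ) (A : Matrix (Fin n) (Fin n) ℚ)
    (hsym : ∀ i j, A i j = A j i) (hdiag : ∀ i, A i i < 0)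
    (hoff : ∀ i j, i ≠ j → 0 ≤ A i j) (hneg : NegDefQ A)
    (htree : (dualGraph A).IsTree)
    (hC : ∀ i, ∑ j, A i j ≤ 0) :
    (∀ i : Fin n, IsLeaf (dualGraph A) i → ∑ j, A i j < 0) ↔ NashNNAll A := by
  refine ⟨fun hleaf i j hij => ?_, fun hNN i hi => rowSum_neg_of_isLeaf hdiag hoff hNN hi⟩
  obtain ⟨X, hpos, hrow, hlt⟩ :=
    exists_pos_mulVec_le_neg_one_lt hsym hoff hneg htree hC hleaf hij
  exact nashNN_of_rat X hpos hrow hlt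

theorem tree_NN_iff_leaves (n : ℕ) (hn : 2 ≤ n) (A : Matrix (Fin n) (Fin n) ℚ)
    (hsym : ∀ i j, A i j = A j i) (hdiag : ∀ i, A i i < 0)
    (hoff : ∀ i j, i ≠ j → 0 ≤ A i j) (hneg : NegDefQ A)
    (htree : (dualGraph A).IsTree)
    (hC : ∀ i, ∑ j, A i j ≤ 0) :
    (∀ i : Fin n, IsLeaf (dualGraph A) i → ∑ j, A i j < 0) ↔ NashNNAll A :=
  tree_NN_iff_leaves_general n A hsym hdiag hoff hneg htree hC
end

section
/- Assume n ≥ 3, a_{i,j} = 0 for all distinct i, j ≤ n−1, and a_{i,n} > 0 for all i ≤ n−1 (so the dual graph of A is a star with root n in which every other vertex is a leaf). Set Δ_n = a_{n,n} − Σ_{i=1}^{n−1} a_{i,n}²/a_{i,i}. Then A satisfies (NN) if and only if the following three conditions hold: (1) a_{i,i} + a_{i,n} < 0 for all i ≤ n−1; (2) a_{i,i}·a_{j,j}·Δ_n + a_{j,n}·(a_{i,i}·a_{j,n} − a_{j,j}·a_{i,n}) < 0 for all distinct i, j ≤ n−1; (3) (a_{i,n}/a_{i,i})·(a_{i,i}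 + a_{i,n}) + Δ_n < 0 for all i ≤ n−1. -/
/-!
A rational vector `x > 0` with `A x < 0` can be scaled to an integral one with `A x ≤ C` for any
given `C ≤ 0`, so `NN_(i,j)` amounts to such an `x` with `x r = 1` and `x i < x j`. For a star
with root `r` the leaf rows say `x k > f k := -A k r / A k k`, and, with `f r := 1`, the root row
says `Δ + ∑ₖ A k r (x k - f k) < 0`. So the excesses `x k - f k` over the leaves are positive
numbers sharing the budget `-Δ`: `x i < x j` is attainable iff `f i < 1` when `j = r`, and iff
`A j r * max 0 (f i - f j) < -Δ` when `j` is a leaf. Clearing denominators gives (1)–(3).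
-/

open Finset Filter Topology Matrix

section StrictSubsolution

variable {V : Type*} [Fintype V]

def IsStrictSubsolution (A : Matrix V V ℚ) (x : V → ℚ) : Prop :=
  (∀ k, 0 < x k) ∧ ∀ k, (A *ᵥ x) k < 0

theorem IsStrictSubsolution.smul {A : Matrix V V ℚ} {x : V → ℚ} (hx : IsStrictSubsolution A x)
    {c : ℚ} (hc : 0 < c) : IsStrictSubsolution A (c • x) := by
  refine ⟨fun k => mul_pos hc (hx.1 k), fun k => ?_⟩
  rw [Matrix.mulVec_smul]
  exact mul_neg_of_pos_of_neg hc (hx.2 k)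

theorem exists_pos_nat_mul_eq_intCast (x : V → ℚ) :
    ∃ D : ℕ, 0 < D ∧ ∀ k, ∃ z : ℤ, (D : ℚ) * x k = z := by
  refine ⟨∏ k, (x k).den, prod_pos fun k _ => (x k).den_pos, fun k => ?_⟩
  obtain ⟨c, hc⟩ := dvd_prod_of_mem (fun k => (x k).den) (mem_univ k)
  refine ⟨c * (x k).num, ?_⟩
  push_cast [hc, ← Rat.mul_den_eq_num]
  ring

theorem nashNN_of_isStrictSubsolution {A : Matrix V V ℚ} {x : V → ℚ}
    (hx : IsStrictSubsolution A x) {i j : V} (hij : x i < x j) : NashNN A i j := by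
  intro C _
  obtain ⟨D, hD, hDx⟩ := exists_pos_nat_mul_eq_intCast x
  choose X hX using hDx
  have hy : IsStrictSubsolution A ((D : ℚ) • x) := hx.smul (by exact_mod_cast hD)
  obtain ⟨N, hN, hNC⟩ : ∃ N : ℕ, 0 < N ∧ ∀ k, (N : ℚ) * (A *ᵥ ((D : ℚ) • x)) k ≤ C k :=
    ((eventually_gt_atTop 0).and (eventually_all.2 fun k =>
      (tendsto_natCast_atTop_atTop.atTop_mul_const_of_neg (hy.2 k)).eventually_le_atBot
        (C k))).exists
  have hcast : ∀ t, ((N * X t : ℤ) : ℚ) = N * ((D : ℚ) • x) t := fun t => by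
    push_cast [← hX t]
    rfl
  refine ⟨fun t => N * X t, fun k => ?_, fun k => ?_, ?_⟩
  · have : (0 : ℚ) < ((N * X k : ℤ) : ℚ) := hcast k ▸ mul_pos (by exact_mod_cast hN) (hy.1 k)
    exact_mod_cast this
  · simp_rw [hcast, ← mul_assoc, mul_comm _ (N : ℚ), mul_assoc, ← mul_sum]
    exact hNC k
  · have : ((N * X i : ℤ) : ℚ) < ((N * X j : ℤ) : ℚ) := by
      rw [hcast, hcast]
      exact mul_lt_mul_of_pos_left (mul_lt_mul_of_pos_left hij (by exact_mod_cast hD))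
        (by exact_mod_cast hN)
    exact_mod_cast this

theorem nashNN_iff_exists_isStrictSubsolution {A : Matrix V V ℚ} {i j : V} (r : V) :
    NashNN A i j ↔ ∃ x, IsStrictSubsolution A x ∧ x r = 1 ∧ x i < x j := by
  refine ⟨fun h => ?_, fun ⟨x, hx, _, hij⟩ => nashNN_of_isStrictSubsolution hx hij⟩
  obtain ⟨X, hXpos, hXC, hXij⟩ := h (fun _ => -1) fun _ => by norm_num
  have hx : IsStrictSubsolution A fun k => (X k : ℚ) :=
    ⟨fun k => Int.cast_pos.2 (hXpos k), fun k => (hXC k).trans_lt (by norm_num)⟩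
  have hr : (0 : ℚ) < X r := by exact_mod_cast hXpos r
  refine ⟨(X r : ℚ)⁻¹ • fun k => (X k : ℚ), hx.smul (inv_pos.2 hr), inv_mul_cancel₀ hr.ne', ?_⟩
  exact mul_lt_mul_of_pos_left (Int.cast_lt.2 hXij) (inv_pos.2 hr)

end StrictSubsolution

section Star

variable {V : Type*}

structure IsStarAt (A : Matrix V V ℚ) (r : V) : Prop where
  root_symm : ∀ k, A r k = A k r
  diag_neg : ∀ k, k ≠ r → A k k < 0
  leaf_zero : ∀ i j, i ≠ j → i ≠ r → j ≠ r → A i j = 0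
  leaf_root_pos : ∀ k, k ≠ r → 0 < A k r

theorem IsStarAt.mulVec_leaf [Fintype V] {A : Matrix V V ℚ} {r : V} (hA : IsStarAt A r)
    (x : V → ℚ) {k : V} (hk : k ≠ r) : (A *ᵥ x) k = A k k * x k + A k r * x r := by
  simp only [Matrix.mulVec, dotProduct]
  refine Fintype.sum_eq_add k r hk fun t ht => ?_
  rw [hA.leaf_zero k t (Ne.symm ht.1) hk ht.2, zero_mul]

variable [DecidableEq V]

/-- The infimum of `x k` over the strict subsolutions `x` with `x r = 1`. -/
def starFloor (A : Matrix V V ℚ) (r k : V) : ℚ :=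
  if k = r then 1 else -A k r / A k k

@[simp]
theorem starFloor_self (A : Matrix V V ℚ) (r : V) : starFloor A r r = 1 := if_pos rfl

theorem starFloor_of_ne (A : Matrix V V ℚ) {r k : V} (hk : k ≠ r) :
    starFloor A r k = -A k r / A k k := if_neg hk

namespace IsStarAt

variable {A : Matrix V V ℚ} {r : V}

theorem starFloor_lt_iff (hA : IsStarAt A r) {k : V} (hk : k ≠ r) (t : ℚ) :
    starFloor A r k < t ↔ A k k * t + A k r < 0 := by
  rw [starFloor_of_ne A hk, div_lt_iff_of_neg (hA.diag_neg k hk)]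
  constructor <;> intro h <;> linarith

theorem starFloor_pos (hA : IsStarAt A r) (k : V) : 0 < starFloor A r k := by
  by_cases hk : k = r
  · simp [hk]
  · rw [starFloor_of_ne A hk, neg_div, ← div_neg]
    exact div_pos (hA.leaf_root_pos k hk) (neg_pos.2 (hA.diag_neg k hk))

theorem add_lt_zero_iff_starFloor_lt_one (hA : IsStarAt A r) {i : V} (hi : i ≠ r) :
    A i i + A i r < 0 ↔ starFloor A r i < 1 := by
  rw [hA.starFloor_lt_iff hi, mul_one]

end IsStarAt

variable [Fintype V]

def starDefect (A : Matrix V V ℚ) (r : V) : ℚ :=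
  A r r - ∑ k ∈ univ.erase r, A k r ^ 2 / A k k

namespace IsStarAt

variable {A : Matrix V V ℚ} {r : V}

theorem mulVec_root (hA : IsStarAt A r) (x : V → ℚ) :
    (A *ᵥ x) r = A r r * x r + ∑ k ∈ univ.erase r, A k r * x k := by
  rw [Matrix.mulVec, dotProduct, ← add_sum_erase _ _ (mem_univ r)]
  simp_rw [hA.root_symm]

theorem starDefect_eq (hA : IsStarAt A r) :
    starDefect A r = A r r + ∑ k ∈ univ.erase r, A k r * starFloor A r k := by
  rw [starDefect, sub_eq_add_neg, ← sum_neg_distrib]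
  congr 1
  refine sum_congr rfl fun k hk => ?_
  rw [starFloor_of_ne A (ne_of_mem_erase hk)]
  field_simp [(hA.diag_neg k (ne_of_mem_erase hk)).ne]

theorem isStrictSubsolution_iff (hA : IsStarAt A r) {x : V → ℚ} (hx : x r = 1) :
    IsStrictSubsolution A x ↔ (∀ k, k ≠ r → starFloor A r k < x k) ∧
      starDefect A r + ∑ k ∈ univ.erase r, A k r * (x k - starFloor A r k) < 0 := by
  have hroot : (A *ᵥ x) r =
      starDefect A r + ∑ k ∈ univ.erase r, A k r * (x k - starFloor A r k) := by
    simp only [hA.mulVec_root, hA.starDefect_eq, hx, mul_sub, sum_sub_distrib]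
    ring
  constructor
  · rintro ⟨-, hrow⟩
    refine ⟨fun k hk => ?_, hroot ▸ hrow r⟩
    simpa [hA.starFloor_lt_iff hk, hA.mulVec_leaf x hk, hx] using hrow k
  · rintro ⟨hfloor, hsum⟩
    refine ⟨fun k => ?_, fun k => ?_⟩
    · by_cases hk : k = r
      · rw [hk, hx]; exact one_pos
      · exact (hA.starFloor_pos k).trans (hfloor k hk)
    · by_cases hk : k = r
      · rw [hk, hroot]; exact hsum
      · simpa [hA.mulVec_leaf x hk, hx] using (hA.starFloor_lt_iff hk _).1 (hfloor k hk)

theorem leaf_gap_add_starDefect_lt (hA : IsStarAt A r) {x : V → ℚ}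
    (hx : IsStrictSubsolution A x) (hxr : x r = 1) {j : V} (hj : j ≠ r) :
    A j r * (x j - starFloor A r j) + starDefect A r < 0 ∧ starDefect A r < 0 := by
  obtain ⟨hfloor, hsum⟩ := (hA.isStrictSubsolution_iff hxr).1 hx
  have hterm : ∀ k ∈ univ.erase r, 0 ≤ A k r * (x k - starFloor A r k) := fun k hk =>
    mul_nonneg (hA.leaf_root_pos k (ne_of_mem_erase hk)).le
      (sub_nonneg.2 (hfloor k (ne_of_mem_erase hk)).le)
  have hj_le := single_le_sum hterm (mem_erase.2 ⟨hj, mem_univ j⟩)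
  exact ⟨by linarith, by linarith [sum_nonneg hterm]⟩

theorem starFloor_le (hA : IsStarAt A r) {x : V → ℚ} (hx : IsStrictSubsolution A x)
    (hxr : x r = 1) (k : V) : starFloor A r k ≤ x k := by
  by_cases hk : k = r
  · simp [hk, hxr]
  · exact (((hA.isStrictSubsolution_iff hxr).1 hx).1 k hk).le

/-- Subsolutions on the boundary (`x k = starFloor A r k` allowed) can be pushed inside by
raising all leaf coordinates by a small `ε`; all strict inequalities survive. -/
theorem nashNN_of_starFloor_le (hA : IsStarAt A r) {y : V → ℚ} (hyr : y r = 1)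
    (hfloor : ∀ k, k ≠ r → starFloor A r k ≤ y k)
    (hsum : starDefect A r + ∑ k ∈ univ.erase r, A k r * (y k - starFloor A r k) < 0)
    {i j : V} (hij : y i < y j) : NashNN A i j := by
  set x : ℚ → V → ℚ := fun ε k => if k = r then 1 else y k + ε with hxdef
  have hx0 : x 0 = y := funext fun k => by by_cases hk : k = r <;> simp [hxdef, hk, hyr]
  have hcont : ∀ k, Continuous fun ε => x ε k := fun k =>
    continuous_if_const _ (fun _ => continuous_const) fun _ => continuous_const.add continuous_id
  obtain ⟨ε, hε, hεsum, hεij⟩ : ∃ ε : ℚ, 0 < ε ∧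
      starDefect A r + ∑ k ∈ univ.erase r, A k r * (x ε k - starFloor A r k) < 0 ∧
        x ε i < x ε j := by
    have hpos : ∀ᶠ ε in 𝓝[>] (0 : ℚ), 0 < ε := self_mem_nhdsWithin
    refine (hpos.and (nhdsWithin_le_nhds
      ((ContinuousAt.eventually_lt (g := fun _ => 0) ?_ continuousAt_const ?_).and
        ((hcont i).continuousAt.eventually_lt (hcont j).continuousAt ?_)))).exists
    · fun_prop
    · simpa [hx0] using hsum
    · simpa [hx0] using hij
  refine nashNN_of_isStrictSubsolution ((hA.isStrictSubsolution_iff (x := x ε) (if_pos rfl)).2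
    ⟨fun k hk => ?_, hεsum⟩) hεij
  simp only [hxdef, if_neg hk]
  linarith [hfloor k hk]

theorem nashNN_root_iff (hA : IsStarAt A r) {i : V} (hi : i ≠ r) :
    NashNN A i r ↔ starFloor A r i < 1 ∧ starDefect A r < 0 := by
  constructor
  · intro h
    obtain ⟨x, hx, hxr, hir⟩ := (nashNN_iff_exists_isStrictSubsolution r).1 h
    exact ⟨(((hA.isStrictSubsolution_iff hxr).1 hx).1 i hi).trans (hxr ▸ hir),
      (hA.leaf_gap_add_starDefect_lt hx hxr hi).2⟩
  · rintro ⟨hi1, hΔ⟩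
    refine hA.nashNN_of_starFloor_le (starFloor_self A r) (fun _ _ => le_rfl) ?_ ?_
    · simpa using hΔ
    · simpa using hi1

theorem nashNN_leaf_iff (hA : IsStarAt A r) {i j : V} (hij : i ≠ j) (hj : j ≠ r) :
    NashNN A i j ↔
      A j r * (starFloor A r i - starFloor A r j) + starDefect A r < 0 ∧ starDefect A r < 0 := by
  have hjr := hA.leaf_root_pos j hj
  constructor
  · intro h
    obtain ⟨x, hx, hxr, hxij⟩ := (nashNN_iff_exists_isStrictSubsolution r).1 h
    obtain ⟨hgap, hΔ⟩ := hA.leaf_gap_add_starDefect_lt hx hxr hj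
    refine ⟨lt_of_le_of_lt ?_ hgap, hΔ⟩
    have := hA.starFloor_le hx hxr i
    gcongr
    linarith
  · rintro ⟨hgap, hΔ⟩
    obtain ⟨m, hm, hmΔ⟩ :
        ∃ m, max 0 (starFloor A r i - starFloor A r j) < m ∧ m < -starDefect A r / A j r := by
      refine exists_between ((lt_div_iff₀ hjr).2 ?_)
      rcases max_choice 0 (starFloor A r i - starFloor A r j) with h | h <;> rw [h] <;> linarith
    have hm0 : 0 < m := (le_max_left _ _).trans_lt hm
    refine hA.nashNN_of_starFloor_le (y := starFloor A r + Pi.single j m) (by simp [hj])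
      (fun k _ => by by_cases hk : k = j <;> simp [hk, hm0.le]) ?_ ?_
    · simp only [Pi.add_apply, add_sub_cancel_left, Pi.single_apply, mul_ite, mul_zero,
        sum_ite_eq', mem_erase, ne_eq, hj, not_false_eq_true, mem_univ, and_self, if_true]
      rw [lt_div_iff₀ hjr] at hmΔ
      linarith
    · simp only [Pi.add_apply, Pi.single_eq_same, Pi.single_eq_of_ne hij, add_zero]
      linarith [le_max_right 0 (starFloor A r i - starFloor A r j)]

theorem nashNNAll_iff (hA : IsStarAt A r) :
    NashNNAll A ↔ (∀ i, i ≠ r → starFloor A r i < 1) ∧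
      ∀ i j, i ≠ j → j ≠ r →
        A j r * (starFloor A r i - starFloor A r j) + starDefect A r < 0 := by
  constructor
  · intro h
    exact ⟨fun i hi => ((hA.nashNN_root_iff hi).1 (h i r hi)).1,
      fun i j hij hj => ((hA.nashNN_leaf_iff hij hj).1 (h i j hij)).1⟩
  · rintro ⟨hroot, hleaf⟩ i j hij
    have hΔ : ∀ k, k ≠ r → starDefect A r < 0 := fun k hk => by
      have := hleaf r k (Ne.symm hk) hk
      rw [starFloor_self] at this
      nlinarith [hroot k hk, hA.leaf_root_pos k hk]
    by_cases hj : j = r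
    · subst hj
      exact (hA.nashNN_root_iff hij).2 ⟨hroot i hij, hΔ i hij⟩
    · exact (hA.nashNN_leaf_iff hij hj).2 ⟨hleaf i j hij hj, hΔ j hj⟩

theorem leaf_pair_condition_iff (hA : IsStarAt A r) {i j : V} (hi : i ≠ r) (hj : j ≠ r) :
    A i i * A j j * starDefect A r + A j r * (A i i * A j r - A j j * A i r) < 0 ↔
      A j r * (starFloor A r i - starFloor A r j) + starDefect A r < 0 := by
  have hii := hA.diag_neg i hi
  have hjj := hA.diag_neg j hj
  have hfactor : A i i * A j j * starDefect A r + A j r * (A i i * A j r - A j j * A i r) =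
      A i i * A j j * (A j r * (starFloor A r i - starFloor A r j) + starDefect A r) := by
    rw [starFloor_of_ne A hi, starFloor_of_ne A hj]
    field_simp [hii.ne, hjj.ne]
    ring
  rw [hfactor, ← smul_eq_mul, smul_neg_iff_of_pos_left (mul_pos_of_neg_of_neg hii hjj)]

theorem root_pair_condition_iff (hA : IsStarAt A r) {j : V} (hj : j ≠ r) :
    A j r / A j j * (A j j + A j r) + starDefect A r < 0 ↔
      A j r * (starFloor A r r - starFloor A r j) + starDefect A r < 0 := by
  rw [starFloor_self, starFloor_of_ne A hj]
  field_simp [(hA.diag_neg j hj).ne]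
  ring_nf

end IsStarAt

end Star

theorem polygon_singularity_NN_iff_general (n : ℕ) (A : Matrix (Fin n) (Fin n) ℚ)
    (hsym : ∀ i j, A i j = A j i) (hdiag : ∀ i, A i i < 0)
    (r : Fin n)
    (hzero : ∀ i j : Fin n, i ≠ j → i ≠ r → j ≠ r → A i j = 0)
    (hpos : ∀ i : Fin n, i ≠ r → 0 < A i r) :
    NashNNAll A ↔
      ((∀ i : Fin n, i ≠ r → A i i + A i r < 0) ∧
       (∀ i j : Fin n, i ≠ r → j ≠ r → i ≠ j →
          A i i * A j j * (A r r - ∑ k ∈ Finset.univ.erase r, (A k r) ^ 2 / A k k) +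
            A j r * (A i i * A j r - A j j * A i r) < 0) ∧
       (∀ i : Fin n, i ≠ r →
          (A i r / A i i) * (A i i + A i r) +
            (A r r - ∑ k ∈ Finset.univ.erase r, (A k r) ^ 2 / A k k) < 0)) := by
  have hA : IsStarAt A r := ⟨fun k => hsym r k, fun k _ => hdiag k, hzero, hpos⟩
  rw [hA.nashNNAll_iff]
  constructor
  · rintro ⟨hroot, hleaf⟩
    exact ⟨fun i hi => (hA.add_lt_zero_iff_starFloor_lt_one hi).2 (hroot i hi),
      fun i j hi hj hij => (hA.leaf_pair_condition_iff hi hj).2 (hleaf i j hij hj),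
      fun j hj => (hA.root_pair_condition_iff hj).2 (hleaf r j (Ne.symm hj) hj)⟩
  · rintro ⟨h1, h2, h3⟩
    refine ⟨fun i hi => (hA.add_lt_zero_iff_starFloor_lt_one hi).1 (h1 i hi),
      fun i j hij hj => ?_⟩
    by_cases hi : i = r
    · subst hi
      exact (hA.root_pair_condition_iff hj).1 (h3 j hj)
    · exact (hA.leaf_pair_condition_iff hi hj).1 (h2 i j hi hj hij)

theorem polygon_singularity_NN_iff (n : ℕ) (hn : 3 ≤ n) (A : Matrix (Fin n) (Fin n) ℚ)
    (hsym : ∀ i j, A i j = A j i) (hdiag : ∀ i, A i i < 0)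
    (hoff : ∀ i j, i ≠ j → 0 ≤ A i j) (hneg : NegDefQ A)
    (r : Fin n) (hr : (r : ℕ) = n - 1)
    (hzero : ∀ i j : Fin n, i ≠ j → i ≠ r → j ≠ r → A i j = 0)
    (hpos : ∀ i : Fin n, i ≠ r → 0 < A i r) :
    NashNNAll A ↔
      ((∀ i : Fin n, i ≠ r → A i i + A i r < 0) ∧
       (∀ i j : Fin n, i ≠ r → j ≠ r → i ≠ j →
          A i i * A j j * (A r r - ∑ k ∈ Finset.univ.erase r, (A k r) ^ 2 / A k k) +
            A j r * (A i i * A j r - A j j * A i r) < 0) ∧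
       (∀ i : Fin n, i ≠ r →
          (A i r / A i i) * (A i i + A i r) +
            (A r r - ∑ k ∈ Finset.univ.erase r, (A k r) ^ 2 / A k k) < 0)) :=
  polygon_singularity_NN_iff_general n A hsym hdiag r hzero hpos
end
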